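/- arXiv:1702.07297 — 7 statements merged into one kernel-verified Lean document; each statement's English description precedes it below -/
import Mathlib

section
/- Consider any (K,N,Q,T)-scheme. For integers s ≥ 1 and d ≥ 1, let a_{s,d} denote the number of pairs (q,n) ∈ Fin Q × Fin N such that exactly s servers map file n (i.e., |{k : n ∈ M k}| = s) and exactly d servers need the intermediate value (q,n) (i.e., |{k : q ∈ W k and n ∉ M k}| = d). Then the total number of communicated bits satisfies ∑_{k=1}^{K} ℓ k ≥ T · ∑_{s=1}^{K} ∑_{d=1}^{K−s} a_{s,d} · d/(s+d−1); equivalently, the communication load satisfies L ≥ (1/(Q·N)) · ∑_{s=1}^{K} ∑_{d=1}^{K−s} a_{s,d} · d/(s+d−1). -/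
/-!
Make the intermediate values independent and uniform, and measure information by the entropy of
the partitions that random variables induce on the finite set of realizations. Let `𝒮` be a set
of servers and `C` a set of values containing everything mapped outside `𝒮`. By induction on
`#𝒮`, the messages of `𝒮` carry, given the values on `C`, at least
`T log 2 · ∑_{x ∉ C} d/(s + d - 1)` nats, where `s` servers map `x` and `d` servers of `𝒮` need it.
For `k ∈ 𝒮`, the messages of `𝒮 \ {k}` and the local values of `k` determine every value that `k`
needs, so these values contribute `T log 2` nats each, on top of what the induction hypothesis
gives for `𝒮 \ {k}` conditioned on everything `k` knows. Summing over `k ∈ 𝒮` and using Han's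
inequality produces a factor `#𝒮 - 1`, which the weights `d/(s + d - 1)` are designed to absorb.
For all servers and `C = ∅`, the messages carry at most `∑ ℓ k · log 2` nats.
-/

/-- A (K,N,Q,T)-scheme: K servers, N input files, Q output functions,
T-bit intermediate values.  `M k` is the set of files mapped by server `k`,
`W k` the set of functions reduced by server `k`, `len k` the length (in bits)
of server `k`'s message; `enc` produces the message of each server from its
locally computed intermediate values, and `dec` recovers, for each server `k`
and each `q ∈ W k`, the full row of intermediate values of function `q`
from all messages and the local values, correctly for every realization `v`. -/
structure Scheme (K N Q T : ℕ) where
  M : Fin K → Finset (Fin N)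
  W : Fin K → Finset (Fin Q)
  cover : ∀ n : Fin N, ∃ k : Fin K, n ∈ M k
  len : Fin K → ℕ
  enc : (k : Fin K) → (Fin Q → {n : Fin N // n ∈ M k} → (Fin T → Bool)) →
    (Fin (len k) → Bool)
  dec : (k : Fin K) → (q : Fin Q) → q ∈ W k →
    ((j : Fin K) → (Fin (len j) → Bool)) →
    (Fin Q → {n : Fin N // n ∈ M k} → (Fin T → Bool)) →
    (Fin N → Fin T → Bool)
  correct : ∀ (v : Fin Q × Fin N → Fin T → Bool) (k : Fin K) (q : Fin Q) (hq : q ∈ W k),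
    dec k q hq (fun j => enc j (fun q' n => v (q', n.1))) (fun q' n => v (q', n.1)) =
      fun n => v (q, n)

/-- Peak computation load `p = (max_k |M k|)/N`. -/
noncomputable def peakLoad {K N Q T : ℕ} (S : Scheme K N Q T) : ℝ :=
  ((Finset.univ.sup (fun k : Fin K => (S.M k).card) : ℕ) : ℝ) / N

/-- Communication load `L = (∑_k ℓ k)/(Q·N·T)`. -/
noncomputable def commLoad {K N Q T : ℕ} (S : Scheme K N Q T) : ℝ :=
  (∑ k : Fin K, (S.len k : ℝ)) / ((Q : ℝ) * N * T)

/-- Singleton Reduce assignment: the `W k` are pairwise disjoint, cover `Fin Q`,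
and each server reduces at most one function. -/
def SingletonReduce {K N Q T : ℕ} (S : Scheme K N Q T) : Prop :=
  (∀ j k : Fin K, j ≠ k → Disjoint (S.W j) (S.W k)) ∧
  (∀ q : Fin Q, ∃ k : Fin K, q ∈ S.W k) ∧
  (∀ k : Fin K, (S.W k).card ≤ 1)

open Finset Real

namespace Setoid

variable {Ω : Type*} [Fintype Ω]

open Classical in
noncomputable def classCard (r : Setoid Ω) (ω : Ω) : ℕ := #{ω' | r ω' ω}

/-- Shannon entropy, in nats, of the partition `r` under the uniform distribution on `Ω`.
A random variable is represented by the partition it induces: `r ⊓ s` is the joint variable,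
and `r ≤ s` says that `s` is a function of `r`. -/
noncomputable def entropy (r : Setoid Ω) : ℝ :=
  (∑ ω, log (Fintype.card Ω / r.classCard ω)) / Fintype.card Ω

noncomputable def condEntropy (r c : Setoid Ω) : ℝ := (r ⊓ c).entropy - c.entropy

open Classical in
lemma classCard_eq (r : Setoid Ω) (ω : Ω) : r.classCard ω = #{ω' | r ω' ω} := rfl

lemma classCard_pos (r : Setoid Ω) (ω : Ω) : 0 < r.classCard ω := by
  classical
  exact card_pos.2 ⟨ω, by simp⟩

lemma classCard_congr {r : Setoid Ω} {ω ω' : Ω} (h : r ω ω') : r.classCard ω = r.classCard ω' := by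
  classical
  simp only [classCard_eq]
  congr 1
  exact filter_congr fun _ _ => ⟨fun h' => r.trans' h' h, fun h' => r.trans' h' (r.symm' h)⟩

lemma classCard_mono {r s : Setoid Ω} (h : r ≤ s) (ω : Ω) : r.classCard ω ≤ s.classCard ω := by
  classical
  simp only [classCard_eq]
  exact card_le_card (monotone_filter_right _ fun _ _ => Setoid.le_def.1 h)

lemma classCard_top (ω : Ω) : (⊤ : Setoid Ω).classCard ω = Fintype.card Ω := by
  classical
  simp [classCard_eq, Setoid.top_def]

lemma entropy_top : (⊤ : Setoid Ω).entropy = 0 := by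
  simp [entropy, classCard_top]

lemma entropy_anti {r s : Setoid Ω} (h : r ≤ s) : s.entropy ≤ r.entropy := by
  refine div_le_div_of_nonneg_right (sum_le_sum fun ω _ => ?_) (Nat.cast_nonneg _)
  have hn : (0 : ℝ) < Fintype.card Ω := by have := Nonempty.intro ω; positivity
  have hr : (0 : ℝ) < r.classCard ω := by exact_mod_cast r.classCard_pos ω
  have hs : (0 : ℝ) < s.classCard ω := by exact_mod_cast s.classCard_pos ω
  gcongr
  exact_mod_cast classCard_mono h ω

open Classical in
lemma sum_filter_inv_classCard (r : Setoid Ω) (ω₀ : Ω) :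
    ∑ ω with r ω ω₀, (r.classCard ω : ℝ)⁻¹ = 1 := by
  rw [sum_congr rfl fun ω hω => by rw [classCard_congr (mem_filter.1 hω).2], sum_const,
    nsmul_eq_mul, ← classCard_eq]
  exact mul_inv_cancel₀ (by exact_mod_cast (r.classCard_pos ω₀).ne')

lemma sum_inv_classCard (r : Setoid Ω) : ∑ ω, (r.classCard ω : ℝ)⁻¹ = Nat.card (Quotient r) := by
  classical
  calc ∑ ω, (r.classCard ω : ℝ)⁻¹
      = ∑ c : Quotient r, ∑ ω with Quotient.mk r ω = c, (r.classCard ω : ℝ)⁻¹ :=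
        (sum_fiberwise _ _ _).symm
    _ = ∑ _c : Quotient r, 1 := sum_congr rfl fun c _ => by
        induction c using Quotient.inductionOn with
        | h ω₀ =>
          rw [← sum_filter_inv_classCard r ω₀]
          exact sum_congr (filter_congr fun ω _ => Quotient.eq) fun _ _ => rfl
    _ = Nat.card (Quotient r) := by simp

lemma entropy_le_log_card_quotient (r : Setoid Ω) : r.entropy ≤ log (Nat.card (Quotient r)) := by
  rcases isEmpty_or_nonempty Ω with hΩ | hΩ
  · simp [entropy]
  set n : ℝ := (Fintype.card Ω : ℝ)
  set m : ℝ := (Nat.card (Quotient r) : ℝ)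
  have hn : 0 < n := by simp only [n]; exact_mod_cast Fintype.card_pos
  have : Nonempty (Quotient r) := ⟨Quotient.mk r (Classical.arbitrary Ω)⟩
  have hm : 0 < m := by simp only [m]; exact_mod_cast Nat.card_pos
  have key (ω : Ω) : log (n / r.classCard ω) ≤ log m + (n / m * (r.classCard ω : ℝ)⁻¹ - 1) := by
    have hc : (0 : ℝ) < r.classCard ω := by exact_mod_cast r.classCard_pos ω
    have h := log_le_sub_one_of_pos (x := n / (m * r.classCard ω)) (by positivity)
    rw [log_div hn.ne' (by positivity), log_mul hm.ne' hc.ne'] at h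
    rw [log_div hn.ne' hc.ne', show n / m * (r.classCard ω : ℝ)⁻¹ = n / (m * r.classCard ω) by
      field_simp]
    linarith
  rw [entropy, div_le_iff₀ hn]
  calc ∑ ω, log (n / r.classCard ω)
      ≤ ∑ ω, (log m + (n / m * (r.classCard ω : ℝ)⁻¹ - 1)) := sum_le_sum fun ω _ => key ω
    _ = log m * n := by
        rw [sum_add_distrib, sum_sub_distrib, ← mul_sum, sum_inv_classCard]
        simp only [sum_const, card_univ, nsmul_eq_mul, mul_one]
        field_simp
        ring

lemma entropy_ker_le_log_card {α : Type*} [Finite α] (f : Ω → α) :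
    (ker f).entropy ≤ log (Nat.card α) := by
  rcases isEmpty_or_nonempty Ω with hΩ | hΩ
  · simpa [entropy] using log_natCast_nonneg _
  have : Nonempty (Quotient (ker f)) := ⟨Quotient.mk _ (Classical.arbitrary Ω)⟩
  refine (entropy_le_log_card_quotient _).trans (log_le_log ?_ ?_)
  · exact_mod_cast Nat.card_pos
  · exact_mod_cast Nat.card_le_card_of_injective _ (kerLift_injective f)

open Classical in
lemma sum_ite_inv_classCard_mul_le {a b t : Setoid Ω} (ha : a ≤ t) (hb : b ≤ t) (ω₁ ω₂ : Ω) :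
    ∑ ω, (if a ω₁ ω ∧ b ω₂ ω then ((a ⊓ b).classCard ω * t.classCard ω : ℝ)⁻¹ else 0)
      ≤ if t ω₂ ω₁ then (t.classCard ω₂ : ℝ)⁻¹ else 0 := by
  by_cases h : ∃ ω₀, a ω₁ ω₀ ∧ b ω₂ ω₀
  · obtain ⟨ω₀, h₁, h₂⟩ := h
    have ht : t ω₂ ω₁ := t.trans' (Setoid.le_def.1 hb h₂) (t.symm' (Setoid.le_def.1 ha h₁))
    have hiff (ω : Ω) : a ω₁ ω ∧ b ω₂ ω ↔ (a ⊓ b) ω ω₀ := by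
      refine Iff.trans ?_ Setoid.inf_iff_and.symm
      exact ⟨fun h => ⟨a.trans' (a.symm' h.1) h₁, b.trans' (b.symm' h.2) h₂⟩,
        fun h => ⟨a.trans' h₁ (a.symm' h.1), b.trans' h₂ (b.symm' h.2)⟩⟩
    rw [if_pos ht, ← sum_filter, ← one_mul (t.classCard ω₂ : ℝ)⁻¹,
      ← sum_filter_inv_classCard (a ⊓ b) ω₀, sum_mul]
    refine le_of_eq (sum_congr (filter_congr fun ω _ => hiff ω) fun ω hω => ?_)
    have hb' : b ω ω₂ := b.trans' (Setoid.inf_iff_and.1 (mem_filter.1 hω).2).2 (b.symm' h₂)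
    rw [classCard_congr (Setoid.le_def.1 hb hb'), mul_inv]
  · simp only [not_exists, not_and] at h
    rw [sum_eq_zero fun ω _ => if_neg fun h' => h ω h'.1 h'.2]
    split_ifs <;> positivity

lemma sum_classCard_mul_div_le {a b t : Setoid Ω} (ha : a ≤ t) (hb : b ≤ t) :
    ∑ ω, (a.classCard ω * b.classCard ω : ℝ) / ((a ⊓ b).classCard ω * t.classCard ω)
      ≤ Fintype.card Ω := by
  classical
  have expand (ω : Ω) : (a.classCard ω * b.classCard ω : ℝ) / ((a ⊓ b).classCard ω * t.classCard ω)
      = ∑ ω₁, ∑ ω₂,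
        if a ω₁ ω ∧ b ω₂ ω then ((a ⊓ b).classCard ω * t.classCard ω : ℝ)⁻¹ else 0 := by
    have hcard (r : Setoid Ω) : (r.classCard ω : ℝ) = ∑ ω', if r ω' ω then 1 else 0 := by
      rw [classCard_eq, natCast_card_filter]
    rw [div_eq_mul_inv, hcard a, hcard b, sum_mul_sum, sum_mul]
    refine sum_congr rfl fun ω₁ _ => ?_
    rw [sum_mul]
    refine sum_congr rfl fun ω₂ _ => ?_
    split_ifs <;> simp_all
  calc ∑ ω, (a.classCard ω * b.classCard ω : ℝ) / ((a ⊓ b).classCard ω * t.classCard ω)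
      = ∑ ω₁, ∑ ω₂, ∑ ω,
        if a ω₁ ω ∧ b ω₂ ω then ((a ⊓ b).classCard ω * t.classCard ω : ℝ)⁻¹ else 0 := by
        simp only [expand]
        rw [sum_comm]
        exact sum_congr rfl fun _ _ => sum_comm
    _ ≤ ∑ ω₁ : Ω, ∑ ω₂, if t ω₂ ω₁ then (t.classCard ω₂ : ℝ)⁻¹ else 0 :=
        sum_le_sum fun ω₁ _ => sum_le_sum fun ω₂ _ => sum_ite_inv_classCard_mul_le ha hb ω₁ ω₂
    _ = Fintype.card Ω := by simp [← sum_filter, sum_filter_inv_classCard]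

theorem entropy_inf_add_entropy_le {a b t : Setoid Ω} (ha : a ≤ t) (hb : b ≤ t) :
    (a ⊓ b).entropy + t.entropy ≤ a.entropy + b.entropy := by
  simp only [entropy, ← add_div]
  refine div_le_div_of_nonneg_right ?_ (Nat.cast_nonneg (α := ℝ) _)
  rw [← sum_add_distrib, ← sum_add_distrib, ← sub_nonneg, ← sum_sub_distrib]
  set n : ℝ := (Fintype.card Ω : ℝ)
  have key (ω : Ω) : 1 - (a.classCard ω * b.classCard ω : ℝ)
        / ((a ⊓ b).classCard ω * t.classCard ω)
      ≤ log (n / a.classCard ω) + log (n / b.classCard ω)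
        - (log (n / (a ⊓ b).classCard ω) + log (n / t.classCard ω)) := by
    have hn : 0 < n := by have := Nonempty.intro ω; simp only [n]; exact_mod_cast Fintype.card_pos
    have hA : (0 : ℝ) < a.classCard ω := by exact_mod_cast a.classCard_pos ω
    have hB : (0 : ℝ) < b.classCard ω := by exact_mod_cast b.classCard_pos ω
    have hAB : (0 : ℝ) < (a ⊓ b).classCard ω := by exact_mod_cast (a ⊓ b).classCard_pos ω
    have hT : (0 : ℝ) < t.classCard ω := by exact_mod_cast t.classCard_pos ω
    have h := log_le_sub_one_of_pos (x := (a.classCard ω * b.classCard ω : ℝ)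
      / ((a ⊓ b).classCard ω * t.classCard ω)) (by positivity)
    rw [log_div (by positivity) (by positivity), log_mul hA.ne' hB.ne', log_mul hAB.ne' hT.ne'] at h
    rw [log_div hn.ne' hA.ne', log_div hn.ne' hB.ne', log_div hn.ne' hAB.ne', log_div hn.ne' hT.ne']
    linarith
  have hsum := sum_le_sum fun ω (_ : ω ∈ univ) => key ω
  rw [sum_sub_distrib, sum_const, card_univ, nsmul_one] at hsum
  linarith [sum_classCard_mul_div_le ha hb]

lemma condEntropy_nonneg (r c : Setoid Ω) : 0 ≤ condEntropy r c :=
  sub_nonneg.2 (entropy_anti inf_le_right)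

lemma condEntropy_top (r : Setoid Ω) : condEntropy r ⊤ = r.entropy := by
  simp [condEntropy, entropy_top]

lemma condEntropy_inf (r s c : Setoid Ω) :
    condEntropy (r ⊓ s) c = condEntropy s c + condEntropy r (s ⊓ c) := by
  simp only [condEntropy, inf_assoc]
  ring

lemma condEntropy_inf_of_le {r s c : Setoid Ω} (h : r ⊓ c ≤ s) :
    condEntropy (r ⊓ s) c = condEntropy r c := by
  rw [condEntropy, condEntropy, inf_right_comm, inf_eq_left.2 h]

lemma condEntropy_inf_le (r s c : Setoid Ω) :
    condEntropy (r ⊓ s) c ≤ condEntropy r c + condEntropy s c := by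
  have := entropy_inf_add_entropy_le (inf_le_right : r ⊓ c ≤ c) (inf_le_right : s ⊓ c ≤ c)
  rw [← inf_inf_distrib_right] at this
  simp only [condEntropy]
  linarith

lemma condEntropy_anti_right (r : Setoid Ω) {c c' : Setoid Ω} (h : c' ≤ c) :
    condEntropy r c' ≤ condEntropy r c := by
  have := entropy_inf_add_entropy_le (inf_le_right : r ⊓ c ≤ c) h
  rw [inf_assoc, inf_eq_right.2 h] at this
  simp only [condEntropy]
  linarith

section Family

variable {ι : Type*} [DecidableEq ι] (r : ι → Setoid Ω)

lemma condEntropy_biInf_le_sum (𝒮 : Finset ι) (c : Setoid Ω) :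
    condEntropy (⨅ k ∈ 𝒮, r k) c ≤ ∑ k ∈ 𝒮, condEntropy (r k) c := by
  induction 𝒮 using Finset.induction_on with
  | empty => simp [condEntropy]
  | insert k 𝒮 hk ih =>
    rw [Finset.iInf_insert, sum_insert hk]
    linarith [condEntropy_inf_le (r k) (⨅ j ∈ 𝒮, r j) c]

/-- A form of Han's inequality. -/
lemma sum_condEntropy_biInf_erase_le (𝒮 : Finset ι) (c : Setoid Ω) :
    ∑ k ∈ 𝒮, condEntropy (⨅ j ∈ 𝒮.erase k, r j) (r k ⊓ c)
      ≤ (#𝒮 - 1) * condEntropy (⨅ k ∈ 𝒮, r k) c := by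
  have chain (k : ι) (hk : k ∈ 𝒮) : condEntropy (⨅ j ∈ 𝒮.erase k, r j) (r k ⊓ c)
      = condEntropy (⨅ k ∈ 𝒮, r k) c - condEntropy (r k) c := by
    have h𝒮 : ⨅ k ∈ 𝒮, r k = (⨅ j ∈ 𝒮.erase k, r j) ⊓ r k := by
      rw [inf_comm, ← Finset.iInf_insert, insert_erase hk]
    rw [h𝒮, condEntropy_inf]
    ring
  rw [sum_congr rfl chain, sum_sub_distrib, sum_const, nsmul_eq_mul]
  linarith [condEntropy_biInf_le_sum r 𝒮 c]

end Family

section AgreeOn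

variable {ι β : Type*}

def agreeOn (C : Finset ι) : Setoid (ι → β) where
  r ω ω' := ∀ x ∈ C, ω x = ω' x
  iseqv := ⟨fun _ _ _ => rfl, fun h x hx => (h x hx).symm,
    fun h h' x hx => (h x hx).trans (h' x hx)⟩

lemma agreeOn_iff {C : Finset ι} {ω ω' : ι → β} : agreeOn C ω ω' ↔ ∀ x ∈ C, ω x = ω' x := Iff.rfl

lemma agreeOn_anti {C D : Finset ι} (h : C ⊆ D) : (agreeOn D : Setoid (ι → β)) ≤ agreeOn C :=
  Setoid.le_def.2 fun hD x hx => hD x (h hx)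

variable [DecidableEq ι]

lemma agreeOn_union (C D : Finset ι) :
    (agreeOn (C ∪ D) : Setoid (ι → β)) = agreeOn C ⊓ agreeOn D :=
  Setoid.ext fun _ _ => by
    simp only [Setoid.inf_iff_and, agreeOn_iff, mem_union, or_imp, forall_and]

variable [Fintype ι] [Fintype β]

lemma classCard_agreeOn (C : Finset ι) (ω : ι → β) :
    (agreeOn C).classCard ω = Fintype.card β ^ #Cᶜ := by
  classical
  have : ({ω' | agreeOn C ω' ω} : Finset (ι → β))
      = Fintype.piFinset fun x => if x ∈ C then {ω x} else univ := by
    ext ω'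
    simp only [mem_filter, mem_univ, true_and, agreeOn_iff, Fintype.mem_piFinset]
    refine forall_congr' fun x => ?_
    split_ifs <;> simp [*]
  rw [classCard_eq, this, Fintype.card_piFinset]
  simp [apply_ite card, prod_ite, filter_not, compl_eq_univ_sdiff]

lemma entropy_agreeOn [Nonempty β] (C : Finset ι) :
    (agreeOn C : Setoid (ι → β)).entropy = #C * log (Fintype.card β) := by
  have hβ : (0 : ℝ) < Fintype.card β := by exact_mod_cast Fintype.card_pos
  have hΩ : (Fintype.card (ι → β) : ℝ) = Fintype.card β ^ #C * Fintype.card β ^ #Cᶜ := by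
    rw [Fintype.card_fun, ← card_add_card_compl C, pow_add]; push_cast; ring
  simp only [entropy, classCard_agreeOn, sum_const, card_univ, nsmul_eq_mul, hΩ]
  push_cast
  rw [mul_div_cancel_right₀ _ (by positivity), mul_div_cancel_left₀ _ (by positivity), log_pow]

lemma condEntropy_agreeOn [Nonempty β] (C D : Finset ι) :
    condEntropy (agreeOn D) (agreeOn C : Setoid (ι → β)) = #(D \ C) * log (Fintype.card β) := by
  rw [condEntropy, ← agreeOn_union, entropy_agreeOn, entropy_agreeOn, ← card_sdiff_add_card]
  push_cast
  ring

end AgreeOn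

end Setoid

namespace Scheme

open Setoid

variable {K N Q T : ℕ} (S : Scheme K N Q T)

abbrev Realization (Q N T : ℕ) : Type := Fin Q × Fin N → Fin T → Bool

def message (k : Fin K) (v : Realization Q N T) : Fin (S.len k) → Bool :=
  S.enc k fun q n => v (q, n.1)

def messages (𝒮 : Finset (Fin K)) : Setoid (Realization Q N T) :=
  ⨅ k ∈ 𝒮, ker (S.message k)

def mappers (x : Fin Q × Fin N) : Finset (Fin K) := {k | x.2 ∈ S.M k}

def needers (x : Fin Q × Fin N) : Finset (Fin K) := {k | x.1 ∈ S.W k ∧ x.2 ∉ S.M k}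

def localValues (k : Fin K) : Finset (Fin Q × Fin N) := {x | x.2 ∈ S.M k}

def neededValues (k : Fin K) : Finset (Fin Q × Fin N) := {x | x.1 ∈ S.W k ∧ x.2 ∉ S.M k}

@[simp] lemma mem_mappers {x : Fin Q × Fin N} {k : Fin K} : k ∈ S.mappers x ↔ x.2 ∈ S.M k := by
  simp [mappers]

@[simp] lemma mem_needers {x : Fin Q × Fin N} {k : Fin K} :
    k ∈ S.needers x ↔ x.1 ∈ S.W k ∧ x.2 ∉ S.M k := by
  simp [needers]

@[simp] lemma mem_localValues {x : Fin Q × Fin N} {k : Fin K} :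
    x ∈ S.localValues k ↔ x.2 ∈ S.M k := by
  simp [localValues]

@[simp] lemma mem_neededValues {x : Fin Q × Fin N} {k : Fin K} :
    x ∈ S.neededValues k ↔ x.1 ∈ S.W k ∧ x.2 ∉ S.M k := by
  simp [neededValues]

lemma agreeOn_localValues_le_ker_message (k : Fin K) :
    agreeOn (S.localValues k) ≤ ker (S.message k) :=
  Setoid.le_def.2 fun h => ker_def.2 <| congrArg (S.enc k) <| funext₂ fun _ n =>
    h _ ((S.mem_localValues).2 n.2)

lemma agreeOn_le_messages {𝒯 : Finset (Fin K)} {C : Finset (Fin Q × Fin N)}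
    (h : ∀ k ∈ 𝒯, S.localValues k ⊆ C) : agreeOn C ≤ S.messages 𝒯 :=
  le_iInf₂ fun k hk => (agreeOn_anti (h k hk)).trans (S.agreeOn_localValues_le_ker_message k)

lemma messages_inf_agreeOn_le {𝒯 : Finset (Fin K)} {C : Finset (Fin Q × Fin N)} {k : Fin K}
    (hC : ∀ j ∉ 𝒯, S.localValues j ⊆ C) (hk : S.localValues k ⊆ C) :
    S.messages 𝒯 ⊓ agreeOn C ≤ agreeOn (S.neededValues k) := by
  have hall : S.messages 𝒯 ⊓ agreeOn C ≤ S.messages univ := by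
    rw [← union_compl 𝒯]
    unfold messages
    rw [Finset.iInf_union]
    exact inf_le_inf_left _ (S.agreeOn_le_messages fun j hj => hC j (mem_compl.1 hj))
  refine Setoid.le_def.2 fun {ω₁ ω₂} h x hx => ?_
  have hW : x.1 ∈ S.W k := ((S.mem_neededValues).1 hx).1
  have hmsg : (fun j => S.message j ω₁) = fun j => S.message j ω₂ := funext fun j =>
    ker_def.1 (Setoid.le_def.1 ((iInf₂_le j (mem_univ j)).trans' hall) h)
  have hloc : (fun q (n : {n // n ∈ S.M k}) => ω₁ (q, n.1)) = fun q n => ω₂ (q, n.1) :=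
    funext₂ fun _ n => (inf_iff_and.1 h).2 _ (hk ((S.mem_localValues).2 n.2))
  calc ω₁ x = S.dec k x.1 hW (fun j => S.message j ω₁) (fun q n => ω₁ (q, n.1)) x.2 :=
        (congrFun (S.correct ω₁ k x.1 hW) x.2).symm
    _ = S.dec k x.1 hW (fun j => S.message j ω₂) (fun q n => ω₂ (q, n.1)) x.2 := by
        rw [hmsg, hloc]
    _ = ω₂ x := congrFun (S.correct ω₂ k x.1 hW) x.2

lemma condEntropy_messages_univ_le (c : Setoid (Realization Q N T)) :
    condEntropy (S.messages univ) c ≤ (∑ k, (S.len k : ℝ)) * log 2 := by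
  calc condEntropy (S.messages univ) c ≤ ∑ k, condEntropy (ker (S.message k)) c :=
        condEntropy_biInf_le_sum _ _ _
    _ ≤ ∑ k, condEntropy (ker (S.message k)) ⊤ :=
        sum_le_sum fun k _ => condEntropy_anti_right _ le_top
    _ ≤ ∑ k, (S.len k : ℝ) * log 2 := sum_le_sum fun k _ => by
        simpa [condEntropy_top, log_pow] using entropy_ker_le_log_card (S.message k)
    _ = (∑ k, (S.len k : ℝ)) * log 2 := (sum_mul ..).symm

lemma condEntropy_agreeOn_realization (C D : Finset (Fin Q × Fin N)) :
    condEntropy (agreeOn D) (agreeOn C : Setoid (Realization Q N T)) = T * log 2 * #(D \ C) := by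
  rw [condEntropy_agreeOn]
  simp [log_pow]
  ring

noncomputable def weight (s d : ℕ) : ℝ := d / (s + d - 1)

lemma weight_nonneg (s d : ℕ) : 0 ≤ weight s d := by
  rcases d with _ | d
  · simp [weight]
  · have : (0 : ℝ) ≤ s := Nat.cast_nonneg s
    exact div_nonneg (Nat.cast_nonneg _) (by push_cast; linarith)

lemma weight_zero (s : ℕ) : weight s 0 = 0 := by simp [weight]

lemma add_sub_one_mul_weight {s : ℕ} (hs : 1 ≤ s) (d : ℕ) : ((s : ℝ) + d - 1) * weight s d = d := by
  rcases d with _ | d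
  · simp [weight]
  · have : (1 : ℝ) ≤ s := by exact_mod_cast hs
    exact mul_div_cancel₀ _ (by push_cast; linarith)

noncomputable def weightSum (𝒮 : Finset (Fin K)) (C : Finset (Fin Q × Fin N)) : ℝ :=
  ∑ x ∈ Cᶜ, weight #(S.mappers x) #(S.needers x ∩ 𝒮)

/-- The part of the weight of `x` in `S.weightSum 𝒮` that is charged to server `k`. -/
noncomputable def share (𝒮 : Finset (Fin K)) (k : Fin K) (x : Fin Q × Fin N) : ℝ :=
  if k ∈ S.needers x then 1
  else if k ∈ S.mappers x then 0
  else weight #(S.mappers x) #(S.needers x ∩ 𝒮)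

lemma mappers_nonempty (x : Fin Q × Fin N) : (S.mappers x).Nonempty := by
  obtain ⟨k, hk⟩ := S.cover x.2
  exact ⟨k, (S.mem_mappers).2 hk⟩

lemma disjoint_mappers_needers (x : Fin Q × Fin N) : Disjoint (S.mappers x) (S.needers x) :=
  disjoint_left.2 fun _ hm hn => ((S.mem_needers).1 hn).2 ((S.mem_mappers).1 hm)

lemma mappers_subset {𝒮 : Finset (Fin K)} {C : Finset (Fin Q × Fin N)}
    (hC : ∀ j ∉ 𝒮, S.localValues j ⊆ C) {x : Fin Q × Fin N} (hx : x ∉ C) : S.mappers x ⊆ 𝒮 :=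
  fun j hj => by_contra fun hj𝒮 => hx (hC j hj𝒮 ((S.mem_localValues).2 ((S.mem_mappers).1 hj)))

lemma weightSum_eq_zero {𝒮 : Finset (Fin K)} {C : Finset (Fin Q × Fin N)} (h𝒮 : #𝒮 ≤ 1)
    (hC : ∀ j ∉ 𝒮, S.localValues j ⊆ C) : S.weightSum 𝒮 C = 0 := by
  refine sum_eq_zero fun x hx => ?_
  have hsub : S.mappers x ∪ S.needers x ∩ 𝒮 ⊆ 𝒮 :=
    union_subset (S.mappers_subset hC (mem_compl.1 hx)) inter_subset_right
  have hcard := (card_le_card hsub).trans h𝒮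
  rw [card_union_of_disjoint ((S.disjoint_mappers_needers x).mono_right inter_subset_left)] at hcard
  have := (S.mappers_nonempty x).card_pos
  rw [show #(S.needers x ∩ 𝒮) = 0 by omega, weight_zero]

lemma sum_share {𝒮 : Finset (Fin K)} {x : Fin Q × Fin N} (hx : S.mappers x ⊆ 𝒮) :
    ∑ k ∈ 𝒮, S.share 𝒮 k x = (#𝒮 - 1) * weight #(S.mappers x) #(S.needers x ∩ 𝒮) := by
  have hneed : {k ∈ 𝒮 | k ∈ S.needers x} = S.needers x ∩ 𝒮 := by
    rw [filter_mem_eq_inter, inter_comm]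
  have hmap : {k ∈ {k ∈ 𝒮 | k ∉ S.needers x} | k ∈ S.mappers x} = S.mappers x := by
    ext k
    simp only [mem_filter, and_iff_right_iff_imp]
    exact fun hk => ⟨hx hk, disjoint_left.1 (S.disjoint_mappers_needers x) hk⟩
  have hsplit : (#(S.needers x ∩ 𝒮) + #{k ∈ 𝒮 | k ∉ S.needers x} : ℝ) = #𝒮 := by
    have h := card_filter_add_card_filter_not (s := 𝒮) (· ∈ S.needers x)
    rw [hneed] at h
    exact_mod_cast h
  have hsplit' : (#(S.mappers x) + #{k ∈ {k ∈ 𝒮 | k ∉ S.needers x} | k ∉ S.mappers x} : ℝ)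
      = #{k ∈ 𝒮 | k ∉ S.needers x} := by
    have h := card_filter_add_card_filter_not (s := {k ∈ 𝒮 | k ∉ S.needers x}) (· ∈ S.mappers x)
    rw [hmap] at h
    exact_mod_cast h
  simp only [share]
  rw [sum_ite, sum_ite, hneed]
  simp only [sum_const, nsmul_eq_mul, mul_one, mul_zero, zero_add]
  linear_combination (-1) * add_sub_one_mul_weight (S.mappers_nonempty x).card_pos _
    + weight #(S.mappers x) #(S.needers x ∩ 𝒮) * (hsplit + hsplit')

lemma sum_compl_share (𝒮 : Finset (Fin K)) (C : Finset (Fin Q × Fin N)) (k : Fin K) :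
    ∑ x ∈ Cᶜ, S.share 𝒮 k x = #(S.neededValues k \ (C ∪ S.localValues k))
      + S.weightSum (𝒮.erase k) (S.neededValues k ∪ (C ∪ S.localValues k)) := by
  simp only [share, weightSum]
  rw [sum_ite, sum_ite]
  simp only [sum_const, nsmul_eq_mul, mul_one, mul_zero, zero_add]
  have hneed : {x ∈ Cᶜ | k ∈ S.needers x} = S.neededValues k \ (C ∪ S.localValues k) := by
    ext x
    simp only [mem_filter, mem_compl, mem_needers, mem_sdiff, mem_union, mem_neededValues,
      mem_localValues]
    tauto
  have hrest : {x ∈ {x ∈ Cᶜ | k ∉ S.needers x} | k ∉ S.mappers x}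
      = (S.neededValues k ∪ (C ∪ S.localValues k))ᶜ := by
    ext x
    simp only [mem_filter, mem_compl, mem_needers, mem_mappers, mem_union, mem_neededValues,
      mem_localValues]
    tauto
  rw [hneed, ← hrest]
  refine congrArg _ (sum_congr rfl fun x hx => ?_)
  rw [inter_erase, erase_eq_of_notMem fun h => (mem_filter.1 (mem_filter.1 hx).1).2
    (mem_inter.1 h).1]

lemma mul_sum_share_le_condEntropy {𝒮 : Finset (Fin K)} {C : Finset (Fin Q × Fin N)} {k : Fin K}
    (hC : ∀ j ∉ 𝒮, S.localValues j ⊆ C)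
    (ih : ∀ C' : Finset (Fin Q × Fin N), (∀ j ∉ 𝒮.erase k, S.localValues j ⊆ C') →
      T * log 2 * S.weightSum (𝒮.erase k) C' ≤ condEntropy (S.messages (𝒮.erase k)) (agreeOn C')) :
    T * log 2 * ∑ x ∈ Cᶜ, S.share 𝒮 k x
      ≤ condEntropy (S.messages (𝒮.erase k)) (ker (S.message k) ⊓ agreeOn C) := by
  set C' := C ∪ S.localValues k
  set X := S.messages (𝒮.erase k)
  have hC' (j : Fin K) (hj : j ∉ 𝒮.erase k) : S.localValues j ⊆ C' := by
    by_cases hjk : j = k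
    · exact hjk ▸ subset_union_right
    · exact (hC j fun hj𝒮 => hj (mem_erase.2 ⟨hjk, hj𝒮⟩)).trans subset_union_left
  have hC'' (j : Fin K) (hj : j ∉ 𝒮.erase k) : S.localValues j ⊆ S.neededValues k ∪ C' :=
    (hC' j hj).trans subset_union_right
  have hlocal : agreeOn C' ≤ ker (S.message k) ⊓ agreeOn C := by
    rw [agreeOn_union]
    exact le_inf (inf_le_right.trans (S.agreeOn_localValues_le_ker_message k)) inf_le_left
  calc T * log 2 * ∑ x ∈ Cᶜ, S.share 𝒮 k x
      = T * log 2 * #(S.neededValues k \ C') + T * log 2 * S.weightSum (𝒮.erase k)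
          (S.neededValues k ∪ C') := by
        rw [sum_compl_share]
        ring
    _ ≤ condEntropy (agreeOn (S.neededValues k)) (agreeOn C')
          + condEntropy X (agreeOn (S.neededValues k) ⊓ agreeOn C') := by
        rw [condEntropy_agreeOn_realization, ← agreeOn_union]
        exact add_le_add_right (ih _ hC'') _
    _ = condEntropy (X ⊓ agreeOn (S.neededValues k)) (agreeOn C') := (condEntropy_inf ..).symm
    _ = condEntropy X (agreeOn C') :=
        condEntropy_inf_of_le (S.messages_inf_agreeOn_le hC' subset_union_right)
    _ ≤ condEntropy X (ker (S.message k) ⊓ agreeOn C) := condEntropy_anti_right X hlocal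

theorem mul_weightSum_le_condEntropy (𝒮 : Finset (Fin K)) (C : Finset (Fin Q × Fin N))
    (hC : ∀ j ∉ 𝒮, S.localValues j ⊆ C) :
    T * log 2 * S.weightSum 𝒮 C ≤ condEntropy (S.messages 𝒮) (agreeOn C) := by
  induction 𝒮 using Finset.strongInduction generalizing C with
  | H 𝒮 ih =>
  rcases le_or_gt #𝒮 1 with h𝒮 | h𝒮
  · rw [S.weightSum_eq_zero h𝒮 hC, mul_zero]
    exact condEntropy_nonneg _ _
  have hpos : (0 : ℝ) < #𝒮 - 1 := by
    have : (2 : ℝ) ≤ #𝒮 := by exact_mod_cast h𝒮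
    linarith
  refine le_of_mul_le_mul_left ?_ hpos
  calc (#𝒮 - 1) * (T * log 2 * S.weightSum 𝒮 C)
      = ∑ k ∈ 𝒮, T * log 2 * ∑ x ∈ Cᶜ, S.share 𝒮 k x := by
        simp only [weightSum, ← mul_sum]
        rw [sum_comm, mul_left_comm, mul_sum]
        congr 1
        exact sum_congr rfl fun x hx => (S.sum_share (S.mappers_subset hC (mem_compl.1 hx))).symm
    _ ≤ ∑ k ∈ 𝒮, condEntropy (S.messages (𝒮.erase k)) (ker (S.message k) ⊓ agreeOn C) :=
        sum_le_sum fun k hk =>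
          S.mul_sum_share_le_condEntropy hC fun C' hC' => ih _ (erase_ssubset hk) C' hC'
    _ ≤ (#𝒮 - 1) * condEntropy (S.messages 𝒮) (agreeOn C) :=
        sum_condEntropy_biInf_erase_le _ _ _

end Scheme

lemma sum_sum_card_filter_mul_le {X : Type*} [Fintype X] (f g : X → ℕ) (w : ℕ → ℕ → ℝ)
    (hw : ∀ x, 0 ≤ w (f x) (g x)) (I : Finset ℕ) (J : ℕ → Finset ℕ) :
    ∑ s ∈ I, ∑ d ∈ J s, (#{x | f x = s ∧ g x = d} : ℝ) * w s d ≤ ∑ x, w (f x) (g x) := by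
  calc ∑ s ∈ I, ∑ d ∈ J s, (#{x | f x = s ∧ g x = d} : ℝ) * w s d
      = ∑ s ∈ I, ∑ d ∈ J s, ∑ x ∈ {x | f x = s} with g x = d, w (f x) (g x) := by
        refine sum_congr rfl fun s _ => sum_congr rfl fun d _ => ?_
        rw [filter_filter, ← nsmul_eq_mul, ← sum_const]
        exact sum_congr rfl fun x hx => by obtain ⟨-, rfl, rfl⟩ := mem_filter.1 hx; rfl
    _ ≤ ∑ s ∈ I, ∑ x with f x = s, w (f x) (g x) :=
        sum_le_sum fun s _ => sum_fiberwise_le_sum_of_sum_fiber_nonneg fun _ _ =>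
          sum_nonneg fun x _ => hw x
    _ ≤ ∑ x, w (f x) (g x) :=
        sum_fiberwise_le_sum_of_sum_fiber_nonneg fun _ _ => sum_nonneg fun x _ => hw x

theorem total_bits_lower_bound_general (K N Q T : ℕ) (hT : 0 < T) (S : Scheme K N Q T)
    (a : ℕ → ℕ → ℕ)
    (ha : ∀ s d, a s d = (Finset.univ.filter (fun p : Fin Q × Fin N =>
      (Finset.univ.filter (fun k : Fin K => p.2 ∈ S.M k)).card = s ∧
      (Finset.univ.filter (fun k : Fin K => p.1 ∈ S.W k ∧ p.2 ∉ S.M k)).card = d)).card) :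
    ((∑ k : Fin K, (S.len k : ℝ)) ≥
      (T : ℝ) * ∑ s ∈ Finset.Icc 1 K, ∑ d ∈ Finset.Icc 1 (K - s),
        (a s d : ℝ) * d / ((s : ℝ) + d - 1)) ∧
    commLoad S ≥ (1 / ((Q : ℝ) * N)) * ∑ s ∈ Finset.Icc 1 K, ∑ d ∈ Finset.Icc 1 (K - s),
        (a s d : ℝ) * d / ((s : ℝ) + d - 1) := by
  set A := ∑ s ∈ Icc 1 K, ∑ d ∈ Icc 1 (K - s), (a s d : ℝ) * d / ((s : ℝ) + d - 1)
  have hclasses : A ≤ S.weightSum univ ∅ := by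
    have hterm (s d : ℕ) : (a s d : ℝ) * d / ((s : ℝ) + d - 1)
        = #{x | #(S.mappers x) = s ∧ #(S.needers x) = d} * Scheme.weight s d := by
      rw [ha, mul_div_assoc]
      rfl
    simp only [A, hterm, Scheme.weightSum, compl_empty, inter_univ]
    exact sum_sum_card_filter_mul_le _ _ _ (fun _ => Scheme.weight_nonneg _ _) _ _
  have hbits : T * A ≤ ∑ k, (S.len k : ℝ) := by
    have hent := (S.mul_weightSum_le_condEntropy univ ∅ (by simp)).trans
      (S.condEntropy_messages_univ_le _)
    have hlog : 0 < log 2 := log_pos one_lt_two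
    refine le_of_mul_le_mul_right ?_ hlog
    calc T * A * log 2 ≤ T * log 2 * S.weightSum univ ∅ := by
          rw [mul_right_comm]
          exact mul_le_mul_of_nonneg_left hclasses (by positivity)
      _ ≤ (∑ k, (S.len k : ℝ)) * log 2 := hent
  refine ⟨hbits, ?_⟩
  have hT' : (0 : ℝ) < T := by exact_mod_cast hT
  rw [ge_iff_le, commLoad, one_div_mul_eq_div, ← mul_div_mul_right A _ hT'.ne', mul_comm A]
  exact div_le_div_of_nonneg_right hbits (by positivity)

/-- converse bound for the communication load.
`a s d` counts intermediate values `(q,n)` available at exactly `s` servers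
and needed (but not available) at exactly `d` servers. -/
theorem total_bits_lower_bound (K N Q T : ℕ) (hK : 0 < K) (hN : 0 < N) (hQ : 0 < Q)
    (hT : 0 < T) (S : Scheme K N Q T)
    (a : ℕ → ℕ → ℕ)
    (ha : ∀ s d, a s d = (Finset.univ.filter (fun p : Fin Q × Fin N =>
      (Finset.univ.filter (fun k : Fin K => p.2 ∈ S.M k)).card = s ∧
      (Finset.univ.filter (fun k : Fin K => p.1 ∈ S.W k ∧ p.2 ∉ S.M k)).card = d)).card) :
    ((∑ k : Fin K, (S.len k : ℝ)) ≥
      (T : ℝ) * ∑ s ∈ Finset.Icc 1 K, ∑ d ∈ Finset.Icc 1 (K - s),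
        (a s d : ℝ) * d / ((s : ℝ) + d - 1)) ∧
    commLoad S ≥ (1 / ((Q : ℝ) * N)) * ∑ s ∈ Finset.Icc 1 K, ∑ d ∈ Finset.Icc 1 (K - s),
        (a s d : ℝ) * d / ((s : ℝ) + d - 1) :=
  total_bits_lower_bound_general K N Q T hT S a ha
end

section
/- Let c_m, c_s > 0 be reals. Every (K,N,Q,T)-scheme whose Reduce assignment is a singleton Reduce assignment satisfies c_m·p + c_s·L ≥ min_{r ∈ {0,1,…,Q}} f(r), where f(r) = c_m·r/Q + c_s·(Q−r)/(Q·(r+1)), p is the peak computation load and L is the communication load. -/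
/-!
Fix, for every function `q`, a server `σ q` reducing it, and rank the functions by a
permutation `π`. Going through the functions from the last-ranked one backwards, the reducer of
`q` recovers every value `v (q, n)` for which no reducer of `q` or of a later-ranked function has
mapped file `n` (the values it holds locally of that kind were already recovered), so the
messages carry at least `T` bits per such value. Averaging over `π`, a file held by `t` of the
reducers contributes `(Q - t) / (t + 1)` such values. This is convex in `t` and the `t`'s add up
to at most `Q · max_k |M k|`, so the secant of `t ↦ (Q - t) / (t + 1)` between the two integers
around the mean `Q p` bounds `Q L` from below; the left side is then a convex combination of two
values of the function minimised in the statement.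
-/

section PermutationCounting
open Finset Equiv
variable {n : ℕ}

theorem card_perm_isMaxOn_eq {B : Finset (Fin n)} {b b' : Fin n} (hb : b ∈ B) (hb' : b' ∈ B) :
    #{π : Perm (Fin n) | ∀ a ∈ B, π a ≤ π b} = #{π : Perm (Fin n) | ∀ a ∈ B, π a ≤ π b'} := by
  refine card_equiv (Equiv.mulRight (swap b b')) fun π => ?_
  simpa using (swap_bijOn_self (s := (B : Set (Fin n))) (iff_of_true hb hb')).forall
    (p := fun a => π a ≤ π b)

theorem card_filter_isMaxOn_perm (π : Perm (Fin n)) {B : Finset (Fin n)} (hB : B.Nonempty) :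
    #{b ∈ B | ∀ a ∈ B, π a ≤ π b} = 1 := by
  obtain ⟨b, hb, hmax⟩ := B.exists_max_image π hB
  refine card_eq_one.2 ⟨b, eq_singleton_iff_unique_mem.2 ⟨mem_filter.2 ⟨hb, hmax⟩, ?_⟩⟩
  intro c hc
  rw [mem_filter] at hc
  exact π.injective (le_antisymm (hmax c hc.1) (hc.2 b hb))

theorem sum_card_perm_isMaxOn {B : Finset (Fin n)} (hB : B.Nonempty) :
    ∑ b ∈ B, #{π : Perm (Fin n) | ∀ a ∈ B, π a ≤ π b} = n.factorial := by
  have hcard : #(univ : Finset (Perm (Fin n))) = n.factorial := by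
    rw [card_univ, Fintype.card_perm, Fintype.card_fin]
  simp only [card_filter]
  rw [sum_comm, ← hcard, card_eq_sum_ones]
  refine sum_congr rfl fun π _ => ?_
  rw [← card_filter, card_filter_isMaxOn_perm π hB]

theorem card_perm_isMaxOn_mul_card {B : Finset (Fin n)} {b : Fin n} (hb : b ∈ B) :
    #{π : Perm (Fin n) | ∀ a ∈ B, π a ≤ π b} * #B = n.factorial := by
  rw [← sum_card_perm_isMaxOn ⟨b, hb⟩, sum_congr rfl fun b' hb' => card_perm_isMaxOn_eq hb' hb,
    sum_const, smul_eq_mul, mul_comm]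

theorem card_perm_forall_lt_mul {A : Finset (Fin n)} {q : Fin n} (hq : q ∉ A) :
    #{π : Perm (Fin n) | ∀ a ∈ A, π a < π q} * (#A + 1) = n.factorial := by
  rw [← card_insert_of_notMem hq, ← card_perm_isMaxOn_mul_card (mem_insert_self q A)]
  congr 2
  ext π
  simp only [mem_filter, mem_univ, true_and, forall_mem_insert, le_refl]
  refine forall₂_congr fun a ha => ?_
  rw [le_iff_lt_or_eq, or_iff_left (π.injective.ne (ne_of_mem_of_not_mem ha hq))]

theorem sum_card_perm_forall_lt_mul (A : Finset (Fin n)) :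
    (∑ q, #{π : Perm (Fin n) | ∀ a ∈ A, π a < π q}) * (#A + 1)
      = n.factorial * (n - #A) := by
  have hA : ∀ q ∈ A, #{π : Perm (Fin n) | ∀ a ∈ A, π a < π q} = 0 := fun q hq =>
    card_eq_zero.2 <| filter_false_of_mem fun π _ h => lt_irrefl _ (h q hq)
  rw [← sum_add_sum_compl A, sum_eq_zero hA, zero_add, sum_mul,
    sum_congr rfl fun q hq => card_perm_forall_lt_mul (mem_compl.1 hq), sum_const, smul_eq_mul,
    card_compl, Fintype.card_fin, mul_comm]

end PermutationCounting

section Secant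
open Finset

/-- The secant of the convex function `t ↦ (Q - t) / (t + 1)` through `r` and `r + 1`. -/
noncomputable def secant (Q r : ℕ) (x : ℝ) : ℝ :=
  ((Q : ℝ) - r) / (r + 1) - ((Q : ℝ) + 1) / ((r + 1) * (r + 2)) * (x - r)

theorem secant_le (Q r t : ℕ) : secant Q r t ≤ ((Q : ℝ) - t) / (t + 1) := by
  have hgap : (0 : ℝ) ≤ ((t : ℝ) - r) * (t - r - 1) := by
    rcases le_or_gt t r with h | h
    · have h' : (t : ℝ) ≤ r := by exact_mod_cast h
      nlinarith
    · have h' : (r : ℝ) + 1 ≤ t := by exact_mod_cast h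
      nlinarith
  have hdiff : ((Q : ℝ) - t) / (t + 1) - secant Q r t =
      ((Q : ℝ) + 1) * (((t : ℝ) - r) * (t - r - 1)) / ((t + 1) * ((r + 1) * (r + 2))) := by
    rw [secant]
    field_simp
    ring
  have : 0 ≤ ((Q : ℝ) + 1) * (((t : ℝ) - r) * (t - r - 1)) / ((t + 1) * ((r + 1) * (r + 2))) :=
    div_nonneg (mul_nonneg (by positivity) hgap) (by positivity)
  linarith

theorem card_mul_secant_le_sum {ι : Type*} (s : Finset ι) (t : ι → ℕ) (Q r : ℕ) {x : ℝ}
    (hx : ∑ i ∈ s, (t i : ℝ) ≤ #s * x) :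
    #s * secant Q r x ≤ ∑ i ∈ s, ((Q : ℝ) - t i) / (t i + 1) := by
  have hslope : 0 ≤ ((Q : ℝ) + 1) / ((r + 1) * (r + 2)) := by positivity
  calc #s * secant Q r x ≤ ∑ i ∈ s, secant Q r (t i) := by
        simp only [secant, sum_sub_distrib, ← mul_sum, sum_const, nsmul_eq_mul]
        nlinarith
    _ ≤ _ := sum_le_sum fun i _ => secant_le Q r (t i)

end Secant

namespace Scheme
open Finset Equiv
variable {K N Q T : ℕ} (S : Scheme K N Q T) (σ : Fin Q → Fin K)

def holders (n : Fin N) : Finset (Fin Q) := {q | n ∈ S.M (σ q)}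

def notHeldLater (π : Perm (Fin Q)) : Finset (Fin Q × Fin N) :=
  {p | ∀ q ∈ S.holders σ p.2, π q < π p.1}

variable {S σ}

theorem mul_card_notHeldLater_le (hσ : ∀ q, q ∈ S.W (σ q)) (π : Perm (Fin Q)) :
    T * #(S.notHeldLater σ π) ≤ ∑ k, S.len k := by
  set B := S.notHeldLater σ π
  let ext : ({p // p ∈ B} → Fin T → Bool) → Fin Q × Fin N → Fin T → Bool :=
    fun u p => if h : p ∈ B then u ⟨p, h⟩ else fun _ => false
  let msgs : ({p // p ∈ B} → Fin T → Bool) → (j : Fin K) → Fin (S.len j) → Bool :=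
    fun u j => S.enc j fun q n => ext u (q, n.1)
  have hinj : Function.Injective msgs := by
    intro u u' h
    have hrow : ∀ q, (fun n => ext u (q, n)) = fun n => ext u' (q, n) := by
      intro q
      -- Downward induction on the rank: the values of `B` that the reducer of `q` holds
      -- belong to functions ranked after `q`.
      induction q using (InvImage.wf π wellFounded_gt).induction with
      | _ q ih =>
        have hloc : (fun q' (n : {n // n ∈ S.M (σ q)}) => ext u (q', n.1)) =
            fun q' n => ext u' (q', n.1) := by
          funext q' n
          by_cases hB : (q', n.1) ∈ B
          · exact congrFun (ih q' ((mem_filter.1 hB).2 q (by simp [holders, n.2]))) n.1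
          · simp [ext, hB]
        rw [← S.correct (ext u) (σ q) q (hσ q), ← S.correct (ext u') (σ q) q (hσ q)]
        exact congrArg₂ _ h hloc
    funext ⟨⟨q, n⟩, hp⟩
    simpa [ext, hp] using congrFun (hrow q) n
  have hcard := Fintype.card_le_of_injective msgs hinj
  simp only [Fintype.card_fun, Fintype.card_coe, Fintype.card_pi, Fintype.card_fin,
    Fintype.card_bool, prod_pow_eq_pow_sum, ← pow_mul] at hcard
  exact (Nat.pow_le_pow_iff_right one_lt_two).1 hcard

theorem sum_card_notHeldLater :
    ∑ π : Perm (Fin Q), #(S.notHeldLater σ π) =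
      ∑ n, ∑ q, #{π : Perm (Fin Q) | ∀ a ∈ S.holders σ n, π a < π q} := by
  simp only [notHeldLater, card_filter, Fintype.sum_prod_type]
  rw [sum_comm]
  exact (sum_congr rfl fun q _ => sum_comm).trans sum_comm

theorem mul_sum_div_le_sum_len (hσ : ∀ q, q ∈ S.W (σ q)) :
    (T : ℝ) * ∑ n, ((Q : ℝ) - #(S.holders σ n)) / (#(S.holders σ n) + 1) ≤
      ∑ k, (S.len k : ℝ) := by
  have hcount (n : Fin N) : (∑ q, #{π : Perm (Fin Q) | ∀ a ∈ S.holders σ n, π a < π q} : ℝ) =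
      Q.factorial * (((Q : ℝ) - #(S.holders σ n)) / (#(S.holders σ n) + 1)) := by
    have hle : #(S.holders σ n) ≤ Q := (card_le_univ _).trans_eq (Fintype.card_fin Q)
    rw [mul_div_assoc', eq_div_iff (by positivity), ← Nat.cast_sub hle]
    exact_mod_cast sum_card_perm_forall_lt_mul (S.holders σ n)
  have hsum : (Q.factorial : ℝ) * ∑ n, ((Q : ℝ) - #(S.holders σ n)) / (#(S.holders σ n) + 1) =
      ∑ π : Perm (Fin Q), (#(S.notHeldLater σ π) : ℝ) := by
    rw [mul_sum]
    simp_rw [← hcount]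
    exact_mod_cast sum_card_notHeldLater.symm
  refine le_of_mul_le_mul_left ?_ (Nat.cast_pos.2 Q.factorial_pos)
  calc _ = ∑ π : Perm (Fin Q), (T * #(S.notHeldLater σ π) : ℝ) := by
        rw [mul_left_comm, hsum, mul_sum]
    _ ≤ ∑ π : Perm (Fin Q), ∑ k, (S.len k : ℝ) :=
        sum_le_sum fun π _ => by exact_mod_cast mul_card_notHeldLater_le hσ π
    _ = _ := by rw [sum_const, card_univ, Fintype.card_perm, Fintype.card_fin, nsmul_eq_mul]

theorem sum_card_holders_le :
    ∑ n, #(S.holders σ n) ≤ Q * univ.sup fun k => #(S.M k) := by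
  calc ∑ n, #(S.holders σ n) = ∑ q, #(S.M (σ q)) := by
        simp only [holders, card_filter]
        rw [sum_comm]
        simp
    _ ≤ ∑ _q : Fin Q, univ.sup fun k => #(S.M k) :=
        sum_le_sum fun q _ => le_sup (f := fun k => #(S.M k)) (mem_univ (σ q))
    _ = _ := by simp

theorem secant_div_le_commLoad (hσ : ∀ q, q ∈ S.W (σ q)) (hN : 0 < N) (hQ : 0 < Q)
    (hT : 0 < T) (r : ℕ) {x : ℝ} (hx : ∑ n, (#(S.holders σ n) : ℝ) ≤ N * x) :
    secant Q r x / Q ≤ commLoad S := by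
  have hsec := card_mul_secant_le_sum univ (fun n => #(S.holders σ n)) Q r (by simpa using hx)
  have hlen := S.mul_sum_div_le_sum_len hσ
  rw [card_univ, Fintype.card_fin] at hsec
  rw [commLoad, le_div_iff₀ (by positivity)]
  calc secant Q r x / Q * (Q * N * T) = T * (N * secant Q r x) := by field_simp
    _ ≤ _ := (mul_le_mul_of_nonneg_left hsec (by positivity)).trans hlen

end Scheme

theorem exists_nat_le_le_add_one {Q : ℕ} (hQ : 0 < Q) {x : ℝ} (hx₀ : 0 ≤ x) (hxQ : x ≤ Q) :
    ∃ r : ℕ, r + 1 ≤ Q ∧ (r : ℝ) ≤ x ∧ x ≤ r + 1 := by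
  rcases le_or_gt ⌊x⌋₊ (Q - 1) with h | h
  · exact ⟨⌊x⌋₊, by omega, Nat.floor_le hx₀, (Nat.lt_floor_add_one x).le⟩
  · refine ⟨Q - 1, by omega, ?_, by rwa [Nat.cast_sub hQ, Nat.cast_one, sub_add_cancel]⟩
    exact (Nat.cast_le.2 h.le).trans (Nat.floor_le hx₀)

theorem Finset.inf'_le_convex_comb {ι : Type*} {s : Finset ι} (hs : s.Nonempty) (f : ι → ℝ)
    {i j : ι} (hi : i ∈ s) (hj : j ∈ s) {a b : ℝ} (ha : 0 ≤ a) (hb : 0 ≤ b) (hab : a + b = 1) :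
    s.inf' hs f ≤ a * f i + b * f j := by
  calc s.inf' hs f = a * s.inf' hs f + b * s.inf' hs f := by rw [← add_mul, hab, one_mul]
    _ ≤ a * f i + b * f j := by gcongr <;> exact Finset.inf'_le f ‹_›

open Finset in
theorem sequential_lower_bound_general (K N Q T : ℕ) (hN : 0 < N) (hQ : 0 < Q)
    (hT : 0 < T) (S : Scheme K N Q T) (hS : SingletonReduce S)
    (cm cs : ℝ) (hcs : 0 < cs) :
    cm * peakLoad S + cs * commLoad S ≥
      (Finset.range (Q + 1)).inf' Finset.nonempty_range_add_one
        (fun r : ℕ => cm * (r : ℝ) / Q + cs * ((Q : ℝ) - r) / ((Q : ℝ) * (r + 1))) := by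
  classical
  choose σ hσ using hS.2.1
  set m := univ.sup fun k => #(S.M k) with hm
  have hmN : m ≤ N := Finset.sup_le fun k _ => (card_le_univ _).trans_eq (Fintype.card_fin N)
  set x : ℝ := Q * m / N with hx
  have hxQ : x ≤ Q := by
    rw [div_le_iff₀ (by positivity)]
    exact mul_le_mul_of_nonneg_left (by exact_mod_cast hmN) (by positivity)
  have hp : peakLoad S = x / Q := by
    rw [peakLoad, ← hm, hx]
    field_simp
  obtain ⟨r, hrQ, hrx, hxr⟩ := exists_nat_le_le_add_one hQ (by positivity) hxQ
  have hL : secant Q r x / Q ≤ commLoad S := S.secant_div_le_commLoad hσ hN hQ hT r <| by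
    rw [mul_div_cancel₀ _ (by positivity)]
    exact_mod_cast Scheme.sum_card_holders_le
  rw [ge_iff_le]
  calc _ ≤ (r + 1 - x) * (cm * r / Q + cs * (Q - r) / (Q * (r + 1)))
        + (x - r) * (cm * ↑(r + 1) / Q + cs * (Q - ↑(r + 1)) / (Q * (↑(r + 1) + 1))) :=
        inf'_le_convex_comb _ _ (mem_range.2 (by omega)) (mem_range.2 (by omega))
          (by linarith) (by linarith) (by ring)
    _ = cm * (x / Q) + cs * (secant Q r x / Q) := by
        rw [secant]; push_cast; field_simp; ring
    _ ≤ cm * peakLoad S + cs * commLoad S := by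
        rw [hp]
        gcongr

/-- lower bound on `c_m·p + c_s·L` for schemes with
singleton Reduce assignment. -/
theorem sequential_lower_bound (K N Q T : ℕ) (hK : 0 < K) (hN : 0 < N) (hQ : 0 < Q)
    (hT : 0 < T) (S : Scheme K N Q T) (hS : SingletonReduce S)
    (cm cs : ℝ) (hcm : 0 < cm) (hcs : 0 < cs) :
    cm * peakLoad S + cs * commLoad S ≥
      (Finset.range (Q + 1)).inf' Finset.nonempty_range_add_one
        (fun r : ℕ => cm * (r : ℝ) / Q + cs * ((Q : ℝ) - r) / ((Q : ℝ) * (r + 1))) :=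
  sequential_lower_bound_general K N Q T hN hQ hT S hS cm cs hcs
end

section
/- For every (K,N,Q,T)-scheme whose Reduce assignment W partitions Fin Q (the sets W k are pairwise disjoint and ⋃_k W k = Finset.univ, but |W k| may be arbitrary), there exist K' ≥ K and a (K',N,Q,T)-scheme with a singleton Reduce assignment whose peak computation load equals that of the original scheme and whose communication load equals that of the original scheme. -/
/-!
Choose for every function `q` a server `c q` of `S` that reduces it. Keep the servers of `S` with
their Map sets and messages, but let them reduce nothing, and add one server per function `q`
that maps the same files as `c q`, sends nothing, and decodes `q` from the original messages
exactly as `c q` does. Every Map set of the new scheme is one of the old ones and the new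
servers are silent, so the peak computation load and the communication load do not change.
-/

namespace Scheme

variable {K K' N Q T : ℕ}

lemma enc_congr (S : Scheme K N Q T) (v : Fin Q × Fin N → Fin T → Bool) {k k' : Fin K}
    (h : k' = k) (hlen : S.len k = S.len k') (b : Fin (S.len k)) :
    S.enc k' (fun q' n => v (q', n.1)) (Fin.cast hlen b) =
      S.enc k (fun q' n => v (q', n.1)) b := by
  subst h
  rfl

/-- Server `i` of `S.imitate` maps the files of server `σ i` of `S` and decodes like it; the
servers `ι k` send the messages of `S`, all other servers are silent. -/
def imitate (S : Scheme K N Q T) (σ : Fin K' → Fin K) (ι : Fin K → Fin K')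
    (hσι : Function.LeftInverse σ ι) (W' : Fin K' → Finset (Fin Q))
    (hW' : ∀ i, W' i ⊆ S.W (σ i)) : Scheme K' N Q T where
  M i := S.M (σ i)
  W := W'
  cover n := by
    obtain ⟨k, hk⟩ := S.cover n
    exact ⟨ι k, by rwa [hσι k]⟩
  len i := if ι (σ i) = i then S.len (σ i) else 0
  enc i v b :=
    if h : ι (σ i) = i then S.enc (σ i) v (Fin.cast (if_pos h) b)
    else (Fin.cast (if_neg h) b).elim0
  dec i q hq X v :=
    S.dec (σ i) q (hW' i hq) (fun k b => X (ι k) (Fin.cast (by simp [hσι k]) b)) v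
  correct v i q hq := by
    refine Eq.trans ?_ (S.correct v (σ i) q (hW' i hq))
    congr 1
    funext k b
    simp only [dif_pos (congrArg ι (hσι k)), Fin.cast_cast]
    exact enc_congr S v (hσι k) _ b

lemma singletonReduce_of_injective {S : Scheme K N Q T} (ρ : Fin Q → Fin K)
    (hρ : Function.Injective ρ) (hW : ∀ k, S.W k = ({q | ρ q = k} : Finset (Fin Q))) :
    SingletonReduce S := by
  refine ⟨fun j k hjk => ?_, fun q => ⟨ρ q, by simp [hW]⟩, fun k => ?_⟩
  · simp only [hW, Finset.disjoint_left, Finset.mem_filter, Finset.mem_univ, true_and]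
    rintro q rfl rfl
    exact hjk rfl
  · rw [hW, Finset.card_le_one]
    simp only [Finset.mem_filter, Finset.mem_univ, true_and]
    rintro q rfl q' hq'
    exact hρ hq'.symm

variable (S : Scheme K N Q T) {σ : Fin K' → Fin K} {ι : Fin K → Fin K'}
  (hσι : Function.LeftInverse σ ι) {W' : Fin K' → Finset (Fin Q)}
  (hW' : ∀ i, W' i ⊆ S.W (σ i))

lemma peakLoad_imitate : peakLoad (S.imitate σ ι hσι W' hW') = peakLoad S := by
  have hsup :
      (Finset.univ.sup fun i => (S.M (σ i)).card) = Finset.univ.sup fun k => (S.M k).card := by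
    rw [← Finset.image_univ_of_surjective hσι.surjective, Finset.sup_image]
    rfl
  simp only [peakLoad, imitate, hsup]

lemma commLoad_imitate : commLoad (S.imitate σ ι hσι W' hW') = commLoad S := by
  have hsum : ∑ k, (S.len k : ℝ) = ∑ i, ((S.imitate σ ι hσι W' hW').len i : ℝ) := by
    refine Fintype.sum_of_injective ι hσι.injective _ _ ?_ fun k => ?_
    · intro i hi
      have hsilent : ι (σ i) ≠ i := fun h => hi ⟨σ i, h⟩
      simp [imitate, hsilent]
    · simp [imitate, hσι k]
  simp only [commLoad, hsum]

end Scheme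

theorem singletonize_reduce_general (K N Q T : ℕ) (S : Scheme K N Q T)
    (hcover : ∀ q : Fin Q, ∃ k : Fin K, q ∈ S.W k) :
    ∃ (K' : ℕ) (S' : Scheme K' N Q T), K ≤ K' ∧ SingletonReduce S' ∧
      peakLoad S' = peakLoad S ∧ commLoad S' = commLoad S := by
  choose c hc using hcover
  have hσι : Function.LeftInverse (Fin.append id c) (Fin.castAdd Q) := fun k => by simp
  have hW : ∀ i, ({q | Fin.natAdd K q = i} : Finset (Fin Q)) ⊆ S.W (Fin.append id c i) := by
    intro i q hq
    obtain rfl : Fin.natAdd K q = i := by simpa using hq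
    simpa using hc q
  refine ⟨K + Q, S.imitate _ _ hσι _ hW, Nat.le_add_right K Q, ?_,
    S.peakLoad_imitate hσι hW, S.commLoad_imitate hσι hW⟩
  exact Scheme.singletonReduce_of_injective _ (Fin.natAdd_injective Q K) fun _ => rfl

/-- any scheme whose Reduce assignment partitions `Fin Q` can be
turned into a scheme with singleton Reduce assignment, using at least as many
servers, with the same peak computation load and the same communication load. -/
theorem singletonize_reduce (K N Q T : ℕ) (hK : 0 < K) (hN : 0 < N) (hQ : 0 < Q)
    (hT : 0 < T) (S : Scheme K N Q T)
    (hdisj : ∀ j k : Fin K, j ≠ k → Disjoint (S.W j) (S.W k))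
    (hcover : ∀ q : Fin Q, ∃ k : Fin K, q ∈ S.W k) :
    ∃ (K' : ℕ) (S' : Scheme K' N Q T), K ≤ K' ∧ SingletonReduce S' ∧
      peakLoad S' = peakLoad S ∧ commLoad S' = commLoad S :=
  singletonize_reduce_general K N Q T S hcover
end

section
/- Let Q ≥ 2, let r ∈ {1,…,Q−1}, let H = ⌈Q/r⌉, and suppose N is a positive multiple of H·C(Q,r) (binomial coefficient). Then for every T ≥ 1 there exists a (Q+H, N, Q, T)-scheme with singleton Reduce assignment (server k reduces function k for k ∈ {1,…,Q}, and the remaining H servers reduce nothing) in which each of the Q solver servers maps exactly r·N/Q files, each of the H helper servers maps exactly N/H files (so the peak computation load equals r/Q), and the communication load equals exactly (Q−r)/(Q·(r+1)). -/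
/-!
Files are indexed by triples `(h, B, j)`: a helper `h < H`, an `r`-subset `B` of the solvers and
`j < g`, where `N = H · C(Q,r) · g`. Solver `q` maps the files with `q ∈ B`, helper `h` the files
whose first coordinate is `h`. Solvers send nothing; for every `(r+1)`-subset `A`, every `j` and
every bit `t`, helper `h` broadcasts the XOR over `a ∈ A` of bit `t` of `v (a, (h, A \ {a}, j))`.
A solver `q` missing file `(h, B, j)` (so `q ∉ B`) reads the bit for `A = insert q B`: every other
summand concerns a file `(h, A \ {a}, j)` with `q ∈ A \ {a}`, which `q` maps itself.
Each helper sends `C(Q,r+1) · g · T` bits, so `L = C(Q,r+1) / (Q · C(Q,r)) = (Q-r) / (Q(r+1))`;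
the helpers' load `N/H` is at most the solvers' load `rN/Q` because `Q ≤ r⌈Q/r⌉`.
-/

open Finset

namespace CodedComputing

section Coding

variable {α G : Type*} [DecidableEq α] [AddCommGroup G]

def codedSum (u : α → Finset α → G) (A : Finset α) : G := ∑ a ∈ A, u a (A.erase a)

theorem codedSum_insert_sub_sum {k : α} {B : Finset α} (hk : k ∉ B) (u : α → Finset α → G) :
    codedSum u (insert k B) - ∑ a ∈ B, u a ((insert k B).erase a) = u k B := by
  rw [codedSum, sum_insert hk, erase_insert hk, add_sub_cancel_right]

end Coding

theorem card_subsets_mem_mul_card {α : Type*} [Fintype α] [DecidableEq α] {r : ℕ} (hr : 1 ≤ r)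
    (q : α) :
    #{B : {B : Finset α // #B = r} | q ∈ B.1} * Fintype.card α =
      r * (Fintype.card α).choose r := by
  have hfilter : ({B : Finset α | #B = r ∧ q ∈ B} : Finset _) =
      (powersetCard r univ).filter ({q} ⊆ ·) := by
    ext; simp
  rw [← Fintype.card_subtype, Fintype.card_congr (Equiv.subtypeSubtypeEquivSubtypeInter
      (fun B : Finset α => #B = r) (q ∈ ·)),
    Fintype.card_subtype, hfilter,
    card_filter_powersetCard_subset _ _ _ (subset_univ _) (by simpa using hr), card_univ,
    card_singleton]
  obtain ⟨n, hn⟩ : ∃ n, Fintype.card α = n + 1 :=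
    Nat.exists_eq_add_one.2 (Fintype.card_pos_iff.2 ⟨q⟩)
  obtain ⟨s, rfl⟩ : ∃ s, r = s + 1 := Nat.exists_eq_add_one.2 hr
  rw [hn, Nat.add_sub_cancel, Nat.add_sub_cancel, mul_comm, Nat.add_one_mul_choose_eq, mul_comm]

theorem le_mul_ceil_div {Q r : ℕ} (hr : 0 < r) : Q ≤ r * ⌈(Q : ℚ) / r⌉₊ := by
  have h := Nat.le_ceil ((Q : ℚ) / r)
  rw [div_le_iff₀ (by positivity)] at h
  exact_mod_cast (by linarith : (Q : ℚ) ≤ r * ⌈(Q : ℚ) / r⌉₊)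

theorem peakLoad_eq_div_of_forall_mul_le {K N Q T : ℕ} (S : Scheme K N Q T) {p d : ℕ}
    (hd : 0 < d) (hN : 0 < N) (hle : ∀ k, #(S.M k) * d ≤ p * N)
    (hmax : ∃ k, #(S.M k) * d = p * N) : peakLoad S = p / d := by
  obtain ⟨k₀, hk₀⟩ := hmax
  obtain ⟨k₁, -, hk₁⟩ := exists_mem_eq_sup univ ⟨k₀, mem_univ _⟩ fun k => #(S.M k)
  have hsup : #(S.M k₁) * d = p * N :=
    le_antisymm (hle k₁) (hk₀ ▸ Nat.mul_le_mul_right d (hk₁ ▸ le_sup (f := fun k => #(S.M k))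
      (mem_univ k₀)))
  rw [peakLoad, hk₁, div_eq_div_iff (by positivity) (by positivity)]
  exact_mod_cast hsup

abbrev Subsets (Q r : ℕ) := {B : Finset (Fin Q) // #B = r}

def boolEquivZMod2 : Bool ≃ ZMod 2 := finTwoEquiv.symm

variable {Q r H g N m T : ℕ}

def helperOf (k : Fin (Q + H)) (hk : ¬ (k : ℕ) < Q) : Fin H := ⟨k - Q, by omega⟩

@[simp] theorem helperOf_natAdd (h : Fin H) (hk : ¬ ((Fin.natAdd Q h : Fin (Q + H)) : ℕ) < Q) :
    helperOf (Fin.natAdd Q h) hk = h := by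
  ext; simp [helperOf]

def reduceSet (k : Fin (Q + H)) : Finset (Fin Q) := if hk : (k : ℕ) < Q then {⟨k, hk⟩} else ∅

def msgLen (Q H m : ℕ) (k : Fin (Q + H)) : ℕ := if (k : ℕ) < Q then 0 else m

theorem msgLen_of_not_lt {k : Fin (Q + H)} (hk : ¬ (k : ℕ) < Q) : msgLen Q H m k = m :=
  if_neg hk

theorem msgLen_natAdd (h : Fin H) : msgLen Q H m (Fin.natAdd Q h) = m :=
  msgLen_of_not_lt (by simp)

def insertSubset (q : Fin Q) (B : Subsets Q r) (hq : q ∉ B.1) : Subsets Q (r + 1) :=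
  ⟨insert q B.1, by rw [card_insert_of_notMem hq, B.2]⟩

@[simp] theorem coe_insertSubset (q : Fin Q) (B : Subsets Q r) (hq : q ∉ B.1) :
    (insertSubset q B hq).1 = insert q B.1 := rfl

def localExt {s : Finset (Fin N)} (loc : Fin Q → {n // n ∈ s} → Fin T → Bool) (q : Fin Q)
    (n : Fin N) : Fin T → Bool :=
  if hn : n ∈ s then loc q ⟨n, hn⟩ else fun _ => false

theorem localExt_restrict {s : Finset (Fin N)} (v : Fin Q × Fin N → Fin T → Bool) (q : Fin Q)
    {n : Fin N} (hn : n ∈ s) : localExt (s := s) (fun q' n' => v (q', n'.1)) q n = v (q, n) := by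
  simp [localExt, hn]

variable (e : Fin H × Subsets Q r × Fin g ≃ Fin N)
  (eM : Subsets Q (r + 1) × Fin g × Fin T ≃ Fin m)

def mapSet (k : Fin (Q + H)) : Finset (Fin N) :=
  if hk : (k : ℕ) < Q then
    (univ ×ˢ ({B | ⟨k, hk⟩ ∈ B.1} : Finset (Subsets Q r)) ×ˢ (univ : Finset (Fin g))).map
      e.toEmbedding
  else ({helperOf k hk} ×ˢ (univ : Finset (Subsets Q r × Fin g))).map e.toEmbedding

/-- Junk value `0` when `#B ≠ r`, so that `codedSum` can range over arbitrary finsets. -/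
def fileBit (u : Fin Q → Fin N → Fin T → Bool) (h : Fin H) (j : Fin g) (t : Fin T) (a : Fin Q)
    (B : Finset (Fin Q)) : ZMod 2 :=
  if hB : #B = r then boolEquivZMod2 (u a (e (h, ⟨B, hB⟩, j)) t) else 0

def encode (k : Fin (Q + H)) (loc : Fin Q → {n // n ∈ mapSet e k} → Fin T → Bool)
    (i : Fin (msgLen Q H m k)) : Bool :=
  if hk : (k : ℕ) < Q then false
  else
    let b := eM.symm (i.cast (msgLen_of_not_lt hk))
    boolEquivZMod2.symm (codedSum (fileBit e (localExt loc) (helperOf k hk) b.2.1 b.2.2) b.1.1)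

def decode (k : Fin (Q + H)) (q : Fin Q) (msgs : (j : Fin (Q + H)) → Fin (msgLen Q H m j) → Bool)
    (loc : Fin Q → {n // n ∈ mapSet e k} → Fin T → Bool) (x : Fin H × Subsets Q r × Fin g) :
    Fin T → Bool :=
  if hq : q ∈ x.2.1.1 then localExt loc q (e x)
  else fun t => boolEquivZMod2.symm
    (boolEquivZMod2 (msgs (Fin.natAdd Q x.1)
        ((eM (insertSubset q x.2.1 hq, x.2.2, t)).cast (msgLen_natAdd x.1).symm)) -
      ∑ a ∈ x.2.1.1, fileBit e (localExt loc) x.1 x.2.2 t a ((insert q x.2.1.1).erase a))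

theorem mem_mapSet_castAdd (q : Fin Q) (n : Fin N) :
    n ∈ mapSet e (Fin.castAdd H q) ↔ q ∈ (e.symm n).2.1.1 := by
  simp [mapSet, mem_map_equiv]

theorem mem_mapSet_natAdd (h : Fin H) (n : Fin N) :
    n ∈ mapSet e (Fin.natAdd Q h) ↔ (e.symm n).1 = h := by
  rw [mapSet, dif_neg (by simp), mem_map_equiv, mem_product, mem_singleton, helperOf_natAdd]
  simp

theorem mem_reduceSet {k : Fin (Q + H)} {q : Fin Q} : q ∈ reduceSet k ↔ k = Fin.castAdd H q := by
  unfold reduceSet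
  split_ifs with hk
  · simp [Fin.ext_iff, eq_comm]
  · simp only [notMem_empty, false_iff]
    rintro rfl
    exact hk q.isLt

theorem fileBit_localExt {s : Finset (Fin N)} (v : Fin Q × Fin N → Fin T → Bool) {h : Fin H}
    {j : Fin g} (t : Fin T) (a : Fin Q) {B : Finset (Fin Q)}
    (hs : ∀ hB : #B = r, e (h, ⟨B, hB⟩, j) ∈ s) :
    fileBit e (localExt (s := s) fun q' n' => v (q', n'.1)) h j t a B =
      fileBit e (fun q' n' => v (q', n')) h j t a B := by
  unfold fileBit
  split_ifs with hB
  · rw [localExt_restrict v a (hs hB)]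
  · rfl

theorem encode_natAdd (h : Fin H)
    (loc : Fin Q → {n // n ∈ mapSet e (Fin.natAdd Q h)} → Fin T → Bool)
    (b : Subsets Q (r + 1) × Fin g × Fin T) :
    encode e eM (Fin.natAdd Q h) loc ((eM b).cast (msgLen_natAdd h).symm) =
      boolEquivZMod2.symm (codedSum (fileBit e (localExt loc) h b.2.1 b.2.2) b.1.1) := by
  simp [encode]

theorem decode_encode (v : Fin Q × Fin N → Fin T → Bool) (q : Fin Q) (h : Fin H)
    (B : Subsets Q r) (j : Fin g) :
    decode e eM (Fin.castAdd H q) q (fun j => encode e eM j fun q' n => v (q', n.1))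
      (fun q' n => v (q', n.1)) (h, B, j) = v (q, e (h, B, j)) := by
  unfold decode
  dsimp only
  split_ifs with hqB
  · exact localExt_restrict v q ((mem_mapSet_castAdd e q _).2 (by simpa using hqB))
  funext t
  have helper_view :
      fileBit e (localExt (s := mapSet e (Fin.natAdd Q h)) fun q' n' => v (q', n'.1)) h j t =
        fileBit e (fun q' n' => v (q', n')) h j t :=
    funext₂ fun a _ => fileBit_localExt e v t a fun _ => (mem_mapSet_natAdd e h _).2 (by simp)
  have solver_view : ∀ a ∈ B.1,
      fileBit e (localExt (s := mapSet e (Fin.castAdd H q)) fun q' n' => v (q', n'.1)) h j t a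
          ((insert q B.1).erase a) =
        fileBit e (fun q' n' => v (q', n')) h j t a ((insert q B.1).erase a) := by
    intro a ha
    refine fileBit_localExt e v t a fun _ => (mem_mapSet_castAdd e q _).2 ?_
    simp only [Equiv.symm_apply_apply, mem_erase, mem_insert_self, and_true]
    rintro rfl
    exact hqB ha
  rw [encode_natAdd, Equiv.apply_symm_apply, helper_view, sum_congr rfl solver_view,
    coe_insertSubset, codedSum_insert_sub_sum hqB]
  simp [fileBit, B.2]

def codedScheme : Scheme (Q + H) N Q T where
  M := mapSet e
  W := reduceSet
  cover n := ⟨Fin.natAdd Q (e.symm n).1, (mem_mapSet_natAdd e _ n).2 rfl⟩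
  len := msgLen Q H m
  enc := encode e eM
  dec k q _ msgs loc n := decode e eM k q msgs loc (e.symm n)
  correct v k q hq := by
    obtain rfl := mem_reduceSet.1 hq
    funext n
    obtain ⟨⟨h, B, j⟩, rfl⟩ := e.surjective n
    rw [Equiv.symm_apply_apply]
    exact decode_encode e eM v q h B j

theorem reduceSet_of_lt {k : Fin (Q + H)} (hk : (k : ℕ) < Q) : reduceSet k = {⟨k, hk⟩} :=
  dif_pos hk

theorem reduceSet_of_le {k : Fin (Q + H)} (hk : Q ≤ (k : ℕ)) : reduceSet k = ∅ :=
  dif_neg (by omega)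

theorem codedScheme_singletonReduce : SingletonReduce (codedScheme e eM) := by
  refine ⟨fun j k hjk => ?_, fun q => ⟨Fin.castAdd H q, mem_reduceSet.2 rfl⟩, fun k => ?_⟩
  · rw [Finset.disjoint_left]
    intro q hj hk
    exact hjk ((mem_reduceSet.1 hj).trans (mem_reduceSet.1 hk).symm)
  · exact card_le_one.2 fun a ha b hb =>
      Fin.castAdd_injective _ _ ((mem_reduceSet.1 ha).symm.trans (mem_reduceSet.1 hb))

theorem card_mapSet_mul_of_lt (hr : 1 ≤ r) {k : Fin (Q + H)} (hk : (k : ℕ) < Q) :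
    #(mapSet e k) * Q = r * (H * Q.choose r * g) := by
  have hsolver := card_subsets_mem_mul_card (α := Fin Q) hr ⟨k, hk⟩
  rw [Fintype.card_fin] at hsolver
  rw [mapSet, dif_pos hk, card_map, card_product, card_product, card_univ, card_univ,
    Fintype.card_fin, Fintype.card_fin]
  calc H * (#{B : Subsets Q r | ⟨k, hk⟩ ∈ B.1} * g) * Q
      = H * g * (#{B : Subsets Q r | ⟨k, hk⟩ ∈ B.1} * Q) := by ring
    _ = r * (H * Q.choose r * g) := by rw [hsolver]; ring

theorem card_mapSet_of_le {k : Fin (Q + H)} (hk : Q ≤ (k : ℕ)) :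
    #(mapSet e k) = Q.choose r * g := by
  rw [mapSet, dif_neg (by omega), card_map, card_product, card_singleton, card_univ,
    Fintype.card_prod, Fintype.card_finset_len, Fintype.card_fin, Fintype.card_fin, one_mul]

theorem card_mapSet_mul_le (hr : 1 ≤ r) (hQH : Q ≤ r * H) (k : Fin (Q + H)) :
    #(mapSet e k) * Q ≤ r * (H * Q.choose r * g) := by
  by_cases hk : (k : ℕ) < Q
  · exact (card_mapSet_mul_of_lt e hr hk).le
  · calc #(mapSet e k) * Q = Q.choose r * g * Q := by rw [card_mapSet_of_le e (not_lt.1 hk)]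
      _ ≤ Q.choose r * g * (r * H) := Nat.mul_le_mul_left _ hQH
      _ = r * (H * Q.choose r * g) := by ring

theorem peakLoad_codedScheme (hr : 1 ≤ r) (hrQ : r < Q) (hQH : Q ≤ r * H)
    (hN : N = H * Q.choose r * g) (hN₀ : 0 < N) :
    peakLoad (codedScheme e eM) = r / Q := by
  subst hN
  exact peakLoad_eq_div_of_forall_mul_le _ (by omega) hN₀ (card_mapSet_mul_le e hr hQH)
    ⟨⟨0, by omega⟩, card_mapSet_mul_of_lt e hr (by simp; omega)⟩

theorem sum_msgLen : ∑ k, msgLen Q H m k = H * m := by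
  simp [Fin.sum_univ_add, msgLen]

theorem commLoad_codedScheme (hrQ : r ≤ Q) (hQ : 0 < Q) (hT : 0 < T)
    (hN : N = H * Q.choose r * g) (hN₀ : 0 < N) (hm : m = Q.choose (r + 1) * g * T) :
    commLoad (codedScheme e eM) = ((Q : ℝ) - r) / ((Q : ℝ) * (r + 1)) := by
  have hpascal : (Q.choose (r + 1) : ℝ) * (r + 1) = Q.choose r * ((Q : ℝ) - r) := by
    exact_mod_cast Nat.choose_succ_right_eq Q r
  have hN' : (0 : ℝ) < N := by exact_mod_cast hN₀
  rw [commLoad, ← Nat.cast_sum]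
  show ((∑ k, msgLen Q H m k : ℕ) : ℝ) / _ = _
  rw [sum_msgLen, div_eq_div_iff (by positivity) (by positivity), hm]
  rw [hN] at hN' ⊢
  push_cast
  linear_combination (H : ℝ) * g * T * Q * hpascal

end CodedComputing

open CodedComputing

theorem coded_scheme_exists_general (Q r H N : ℕ) (hr1 : 1 ≤ r) (hr2 : r ≤ Q - 1)
    (hH : H = ⌈(Q : ℚ) / (r : ℚ)⌉₊) (hN : 0 < N) (hdvd : H * Nat.choose Q r ∣ N) :
    ∀ T : ℕ, 1 ≤ T → ∃ S : Scheme (Q + H) N Q T,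
      SingletonReduce S ∧
      (∀ (k : Fin (Q + H)) (h : (k : ℕ) < Q), S.W k = {⟨(k : ℕ), h⟩}) ∧
      (∀ k : Fin (Q + H), Q ≤ (k : ℕ) → S.W k = ∅) ∧
      (∀ k : Fin (Q + H), (k : ℕ) < Q → (S.M k).card * Q = r * N) ∧
      (∀ k : Fin (Q + H), Q ≤ (k : ℕ) → (S.M k).card * H = N) ∧
      peakLoad S = (r : ℝ) / Q ∧
      commLoad S = ((Q : ℝ) - r) / ((Q : ℝ) * (r + 1)) := by
  intro T hT
  obtain ⟨g, hg⟩ := hdvd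
  have hQH : Q ≤ r * H := hH ▸ le_mul_ceil_div hr1
  let e : Fin H × Subsets Q r × Fin g ≃ Fin N :=
    Fintype.equivFinOfCardEq (by simp [hg, mul_assoc])
  let eM : Subsets Q (r + 1) × Fin g × Fin T ≃ Fin (Q.choose (r + 1) * g * T) :=
    Fintype.equivFinOfCardEq (by simp [mul_assoc])
  refine ⟨codedScheme e eM, codedScheme_singletonReduce e eM, fun k hk => reduceSet_of_lt hk,
    fun k hk => reduceSet_of_le hk, fun k hk => hg ▸ card_mapSet_mul_of_lt e hr1 hk,
    fun k hk => ?_, peakLoad_codedScheme e eM hr1 (by omega) hQH hg hN,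
    commLoad_codedScheme e eM (by omega) (by omega) hT hg hN rfl⟩
  rw [show (codedScheme e eM).M k = mapSet e k from rfl, card_mapSet_of_le e hk, hg]
  ring

/-- achievability.  For `1 ≤ r ≤ Q-1`, `H = ⌈Q/r⌉` and `N` a
positive multiple of `H·C(Q,r)`, there is a `(Q+H,N,Q,T)`-scheme with singleton
Reduce assignment in which server `k < Q` reduces function `k`, helpers reduce
nothing, each solver maps `r·N/Q` files, each helper maps `N/H` files (so the
peak computation load is `r/Q`), and the communication load is
`(Q-r)/(Q·(r+1))`. -/
theorem coded_scheme_exists (Q r H N : ℕ) (hQ : 2 ≤ Q) (hr1 : 1 ≤ r) (hr2 : r ≤ Q - 1)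
    (hH : H = ⌈(Q : ℚ) / (r : ℚ)⌉₊) (hN : 0 < N) (hdvd : H * Nat.choose Q r ∣ N) :
    ∀ T : ℕ, 1 ≤ T → ∃ S : Scheme (Q + H) N Q T,
      SingletonReduce S ∧
      (∀ (k : Fin (Q + H)) (h : (k : ℕ) < Q), S.W k = {⟨(k : ℕ), h⟩}) ∧
      (∀ k : Fin (Q + H), Q ≤ (k : ℕ) → S.W k = ∅) ∧
      (∀ k : Fin (Q + H), (k : ℕ) < Q → (S.M k).card * Q = r * N) ∧
      (∀ k : Fin (Q + H), Q ≤ (k : ℕ) → (S.M k).card * H = N) ∧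
      peakLoad S = (r : ℝ) / Q ∧
      commLoad S = ((Q : ℝ) - r) / ((Q : ℝ) * (r + 1)) :=
  coded_scheme_exists_general Q r H N hr1 hr2 hH hN hdvd
end

section
/- Let c_m, c_s > 0 be reals, let f(r) = c_m·r/Q + c_s·(Q−r)/(Q·(r+1)), and let r* be the largest element of argmin_{r ∈ {0,1,…,Q}} f(r). Assume 0 < r* < Q. Then every (K,N,Q,T)-scheme with singleton Reduce assignment that attains the lower bound with equality, i.e., c_m·p + c_s·L = min_{r ∈ {0,…,Q}} f(r), satisfies K ≥ Q + ⌈Q/r*⌉. -/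
/-!
Fix an order σ of the functions. The messages of all servers except the reducer of the σ-first
function determine every value `v (q, n)` such that `q` precedes, in σ, all functions whose
reducer maps file `n`: decode the rows in the order σ. Averaging over σ, with `d n` reducers
mapping file `n`, gives `L ≥ (1/QN) ∑ₙ (Q - d n)/(d n + 1)` plus the average message length of
the reducers, and `p ≥ ∑ₙ d n / (QN)`; together `c_m p + c_s L ≥ (1/N) ∑ₙ f (d n) ≥ min f`.

Equality forces every `d n` to minimise `f`, so `d n ≤ r* < Q`; every reducer to map exactly
`A = maxₖ |M k|` files; and the reducers to send nothing. A reducer missing file `n` then learns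
its value on `n` only if some non-reducer maps `n`, so `N ≤ (K - Q) A`, while
`Q A = ∑ₙ d n ≤ N r*`. Hence `Q ≤ (K - Q) r*`.
-/

open Finset
open scoped Nat

section PlacedBefore

variable {α : Type*} [Fintype α] [LinearOrder α]

def placedBefore (σ : Equiv.Perm α) (s : Finset α) : Finset α :=
  {x | ∀ y ∈ s, σ x < σ y}

@[simp]
lemma mem_placedBefore {σ : Equiv.Perm α} {s : Finset α} {x : α} :
    x ∈ placedBefore σ s ↔ ∀ y ∈ s, σ x < σ y := by
  simp [placedBefore]

lemma mem_placedBefore_mul_swap {s : Finset α} {x z : α} (hx : x ∈ s) (hz : z ∈ s)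
    (σ : Equiv.Perm α) :
    x ∈ placedBefore (σ * Equiv.swap x z) (s.erase x) ↔ z ∈ placedBefore σ (s.erase z) := by
  simp only [mem_placedBefore, mem_erase, Equiv.Perm.mul_apply, Equiv.swap_apply_left]
  constructor
  · intro h y ⟨hyz, hy⟩
    rcases eq_or_ne y x with rfl | hyx
    · simpa using h z ⟨Ne.symm hyz, hz⟩
    · simpa [Equiv.swap_apply_of_ne_of_ne hyx hyz] using h y ⟨hyx, hy⟩
  · intro h y ⟨hyx, hy⟩
    rcases eq_or_ne y z with rfl | hyz
    · simpa using h x ⟨hyx.symm, hx⟩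
    · simpa [Equiv.swap_apply_of_ne_of_ne hyx hyz] using h y ⟨hyz, hy⟩

lemma card_perm_mem_placedBefore {s : Finset α} {x : α} (hx : x ∉ s) :
    (#s + 1) * #{σ : Equiv.Perm α | x ∈ placedBefore σ s} = Fintype.card (Equiv.Perm α) := by
  set t := insert x s
  have hxt : x ∈ t := mem_insert_self x s
  let first (z : α) : Finset (Equiv.Perm α) := {σ | z ∈ placedBefore σ (t.erase z)}
  have hfirst_x : first x = ({σ | x ∈ placedBefore σ s} : Finset (Equiv.Perm α)) := by
    simp only [first, t, erase_insert hx]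
  have hcard_first : ∀ z ∈ t, #(first z) = #(first x) := by
    intro z hz
    refine card_nbij' (· * Equiv.swap x z) (· * Equiv.swap x z) ?_ ?_ ?_ ?_
    · intro σ hσ
      simp only [first, coe_filter, mem_univ, true_and, Set.mem_ofPred_eq] at hσ ⊢
      rwa [mem_placedBefore_mul_swap hxt hz]
    · intro σ hσ
      simp only [first, coe_filter, mem_univ, true_and, Set.mem_ofPred_eq] at hσ ⊢
      rwa [← mem_placedBefore_mul_swap hxt hz, mul_assoc, Equiv.swap_mul_self, mul_one]
    all_goals intro σ _; simp [mul_assoc]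
  have hunion : t.biUnion first = univ := by
    refine eq_univ_of_forall fun σ => ?_
    obtain ⟨z, hz, hmin⟩ := exists_min_image t σ ⟨x, hxt⟩
    refine mem_biUnion.2 ⟨z, hz, ?_⟩
    simp only [first, mem_filter, mem_univ, true_and, mem_placedBefore, mem_erase]
    exact fun y ⟨hyz, hy⟩ => lt_of_le_of_ne (hmin y hy) (σ.injective.ne hyz.symm)
  have hdisj : (t : Set α).PairwiseDisjoint first := by
    intro z hz z' hz' hzz'
    refine disjoint_left.2 fun σ hσ hσ' => ?_
    simp only [first, mem_filter, mem_univ, true_and, mem_placedBefore, mem_erase] at hσ hσ'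
    exact lt_asymm (hσ z' ⟨hzz'.symm, hz'⟩) (hσ' z ⟨hzz', hz⟩)
  -- the sets `first z`, `z ∈ insert x s`, partition the permutations and have equal size
  rw [← hfirst_x, ← card_univ, ← hunion, card_biUnion hdisj, sum_congr rfl hcard_first, sum_const,
    card_insert_of_notMem hx, smul_eq_mul]

lemma sum_card_placedBefore (s : Finset α) :
    (#s + 1) * ∑ σ : Equiv.Perm α, #(placedBefore σ s)
      = (Fintype.card α - #s) * Fintype.card (Equiv.Perm α) := by
  have hcount : ∀ x, (#s + 1) * #{σ : Equiv.Perm α | x ∈ placedBefore σ s}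
      = if x ∈ s then 0 else Fintype.card (Equiv.Perm α) := by
    intro x
    split_ifs with hx
    · simpa using fun σ => ⟨x, hx, le_rfl⟩
    · exact card_perm_mem_placedBefore hx
  have := sum_card_bipartiteAbove_eq_sum_card_bipartiteBelow (s := univ) (t := univ)
    (fun (σ : Equiv.Perm α) x => x ∈ placedBefore σ s)
  simp only [bipartiteAbove, bipartiteBelow, filter_mem_eq_inter, univ_inter] at this
  rw [this, mul_sum, sum_congr rfl fun x _ => hcount x, sum_ite, sum_const_zero, zero_add,
    sum_const, filter_not, filter_mem_eq_inter, univ_inter, ← compl_eq_univ_sdiff, card_compl,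
    smul_eq_mul]

lemma sum_card_placedBefore_eq_div (s : Finset α) :
    ∑ σ : Equiv.Perm α, (#(placedBefore σ s) : ℝ)
      = (Fintype.card α)! * (((Fintype.card α : ℝ) - #s) / (#s + 1)) := by
  have h : ((#s + 1 : ℕ) : ℝ) * (∑ σ : Equiv.Perm α, #(placedBefore σ s) : ℕ)
      = ((Fintype.card α - #s : ℕ) : ℝ) * ((Fintype.card α)! : ℕ) := by
    exact_mod_cast Fintype.card_perm (α := α) ▸ sum_card_placedBefore s
  rw [Nat.cast_sub (card_le_univ s)] at h
  push_cast at h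
  field_simp
  linarith

lemma sum_le_sum_perm_symm_apply (g : α → ℕ) (a : α) :
    ∑ x, g x ≤ ∑ σ : Equiv.Perm α, g (σ.symm a) := by
  have hinj : Function.Injective fun x => Equiv.swap x a := fun x y h => by
    simpa using congrArg (· a) h
  calc ∑ x, g x = ∑ σ ∈ univ.image (fun x => Equiv.swap x a), g (σ.symm a) := by
        rw [sum_image fun x _ y _ h => hinj h]; simp
    _ ≤ ∑ σ : Equiv.Perm α, g (σ.symm a) := sum_le_sum_of_subset (subset_univ _)

end PlacedBefore

namespace Scheme

variable {K N Q T : ℕ} (S : Scheme K N Q T)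

def msg (v : Fin Q × Fin N → Fin T → Bool) (j : Fin K) : Fin (S.len j) → Bool :=
  S.enc j fun q n => v (q, n.1)

lemma dec_msg (v : Fin Q × Fin N → Fin T → Bool) (k : Fin K) (q : Fin Q) (hq : q ∈ S.W k) :
    S.dec k q hq (S.msg v) (fun q' n => v (q', n.1)) = fun n => v (q, n) :=
  S.correct v k q hq

variable {S}

lemma msg_eq_of_local_eq {v v' : Fin Q × Fin N → Fin T → Bool} {j : Fin K}
    (h : ∀ q n, n ∈ S.M j → v (q, n) = v' (q, n)) : S.msg v j = S.msg v' j := by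
  simp only [msg]
  congr 1
  funext q n
  exact h q n n.2

lemma row_eq_of_msg_eq {v v' : Fin Q × Fin N → Fin T → Bool} (hmsg : S.msg v = S.msg v')
    {k : Fin K} {q : Fin Q} (hq : q ∈ S.W k) (hloc : ∀ q' n, n ∈ S.M k → v (q', n) = v' (q', n))
    (n : Fin N) : v (q, n) = v' (q, n) := by
  have hview : (fun q' (n : {n // n ∈ S.M k}) => v (q', n.1)) = fun q' n => v' (q', n.1) := by
    funext q' n
    exact hloc q' n n.2
  have hrow := S.dec_msg v k q hq
  rw [hmsg, hview, S.dec_msg v' k q hq] at hrow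
  exact (congrFun hrow n).symm

lemma mul_card_le_sum_len (F : Finset (Fin Q × Fin N)) (J : Finset (Fin K))
    (hdet : ∀ v v' : Fin Q × Fin N → Fin T → Bool, (∀ p ∉ F, v p = v' p) →
      (∀ j ∈ J, S.msg v j = S.msg v' j) → v = v') :
    T * #F ≤ ∑ j ∈ J, S.len j := by
  let extend (w : F → Fin T → Bool) (p : Fin Q × Fin N) : Fin T → Bool :=
    if h : p ∈ F then w ⟨p, h⟩ else fun _ => false
  have hinj : Function.Injective fun w (j : J) => S.msg (extend w) j := by
    intro w w' h
    have := hdet (extend w) (extend w') (fun p hp => by simp [extend, hp])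
      (fun j hj => congrFun h ⟨j, hj⟩)
    funext p
    simpa [extend] using congrFun this p
  have hcard := Fintype.card_le_of_injective _ hinj
  simp only [Fintype.card_fun, Fintype.card_pi, Fintype.card_bool, Fintype.card_fin,
    Fintype.card_coe, prod_pow_eq_pow_sum, sum_coe_sort J S.len, ← pow_mul] at hcard
  exact (Nat.pow_le_pow_iff_right (by norm_num)).1 hcard

variable (S) in
def maxMapSize : ℕ :=
  univ.sup fun j => #(S.M j)

lemma le_maxMapSize (j : Fin K) : #(S.M j) ≤ S.maxMapSize :=
  le_sup (f := fun j => #(S.M j)) (mem_univ j)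

variable (S) in
def informed (k : Fin Q → Fin K) (n : Fin N) : Finset (Fin Q) :=
  {q | n ∈ S.M (k q)}

@[simp]
lemma mem_informed {k : Fin Q → Fin K} {n : Fin N} {q : Fin Q} :
    q ∈ S.informed k n ↔ n ∈ S.M (k q) := by
  simp [informed]

lemma card_informed_le (k : Fin Q → Fin K) (n : Fin N) : #(S.informed k n) ≤ Q := by
  simpa using card_le_univ (S.informed k n)

lemma sum_card_informed_le (k : Fin Q → Fin K) :
    ∑ n, #(S.informed k n) ≤ Q * S.maxMapSize := by
  have h := sum_card_bipartiteAbove_eq_sum_card_bipartiteBelow (s := univ) (t := univ)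
    (fun n q => n ∈ S.M (k q))
  simp only [bipartiteAbove, bipartiteBelow, filter_mem_eq_inter, univ_inter] at h
  rw [show ∑ n, #(S.informed k n) = ∑ n, #({q | n ∈ S.M (k q)} : Finset (Fin Q)) from rfl, h]
  simpa using sum_le_sum fun q (_ : q ∈ univ) => S.le_maxMapSize (k q)

lemma chain_bound {k : Fin Q → Fin K} (hk : ∀ q, q ∈ S.W (k q)) (σ : Equiv.Perm (Fin Q))
    {q₀ : Fin Q} (hq₀ : ∀ q, σ q₀ ≤ σ q) :
    T * ∑ n, #(placedBefore σ (S.informed k n)) + S.len (k q₀) ≤ ∑ j, S.len j := by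
  set F : Finset (Fin Q × Fin N) := {p | p.1 ∈ placedBefore σ (S.informed k p.2)}
  have hF : #F = ∑ n, #(placedBefore σ (S.informed k n)) := by
    rw [card_eq_sum_card_fiberwise (f := Prod.snd) (t := univ) fun _ _ => mem_univ _]
    refine sum_congr rfl fun n _ => card_nbij' Prod.fst (·, n) ?_ ?_ ?_ ?_
    all_goals intro p; aesop
  -- nothing precedes `q₀`, so the first reducer sees no value in `F`
  have hF_first : ∀ q n, n ∈ S.M (k q₀) → (q, n) ∉ F := fun q n hn hF =>
    (hq₀ q).not_gt (by simpa [F] using (mem_placedBefore.1 (mem_filter.1 hF).2) q₀ (by simpa))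
  have hdet : ∀ v v' : Fin Q × Fin N → Fin T → Bool, (∀ p ∉ F, v p = v' p) →
      (∀ j ∈ univ.erase (k q₀), S.msg v j = S.msg v' j) → v = v' := by
    intro v v' hout hmsg
    have hmsg_all : S.msg v = S.msg v' := by
      funext j
      rcases eq_or_ne j (k q₀) with rfl | hj
      · exact msg_eq_of_local_eq fun q n hn => hout _ (hF_first q n hn)
      · exact hmsg j (mem_erase.2 ⟨hj, mem_univ j⟩)
    have hrow : ∀ i : Fin Q, ∀ n, v (σ.symm i, n) = v' (σ.symm i, n) := by
      intro i
      induction i using WellFoundedLT.induction with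
      | _ i ih =>
        refine row_eq_of_msg_eq hmsg_all (hk _) fun q' n hn => ?_
        by_cases hq'n : (q', n) ∈ F
        · have hlt : σ q' < i := by
            simpa [F] using (mem_placedBefore.1 (mem_filter.1 hq'n).2) (σ.symm i) (by simpa)
          simpa using ih (σ q') hlt n
        · exact hout _ hq'n
    funext ⟨q, n⟩
    simpa using hrow (σ q) n
  have := S.mul_card_le_sum_len F _ hdet
  rw [← sum_erase_add _ _ (mem_univ (k q₀)), ← hF]
  omega

lemma averaged_chain_bound (hQ : 0 < Q) {k : Fin Q → Fin K} (hk : ∀ q, q ∈ S.W (k q)) :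
    (T : ℝ) * ∑ n, ((Q : ℝ) - #(S.informed k n)) / (#(S.informed k n) + 1)
      + (∑ q, S.len (k q) : ℕ) / (Q ! : ℝ) ≤ ∑ j, (S.len j : ℝ) := by
  have hchain := sum_le_sum fun σ (_ : σ ∈ univ) =>
    S.chain_bound hk σ (q₀ := σ.symm ⟨0, hQ⟩) fun q => by simp [Fin.le_def]
  rw [sum_add_distrib, ← mul_sum, sum_const, card_univ, Fintype.card_perm, Fintype.card_fin,
    smul_eq_mul, sum_comm] at hchain
  have hred := sum_le_sum_perm_symm_apply (fun q => S.len (k q)) ⟨0, hQ⟩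
  have hreal : (T : ℝ) * ∑ n, ∑ σ : Equiv.Perm (Fin Q), (#(placedBefore σ (S.informed k n)) : ℝ)
      + (∑ q, S.len (k q) : ℕ) ≤ Q ! * ∑ j, (S.len j : ℝ) := by
    exact_mod_cast le_trans (by omega) hchain
  simp only [sum_card_placedBefore_eq_div, Fintype.card_fin, ← mul_sum] at hreal
  have hfact : (0 : ℝ) < Q ! := by exact_mod_cast Q.factorial_pos
  rw [← mul_le_mul_iff_of_pos_left hfact, mul_add, mul_div_cancel₀ _ hfact.ne']
  linarith

lemma le_load (hQ : 0 < Q) (hN : 0 < N) (hT : 0 < T) {cm cs : ℝ} (hcs : 0 < cs) {f : ℕ → ℝ}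
    (hf : ∀ r : ℕ, f r = cm * (r : ℝ) / Q + cs * ((Q : ℝ) - r) / ((Q : ℝ) * (r + 1)))
    {k : Fin Q → Fin K} (hk : ∀ q, q ∈ S.W (k q)) :
    (∑ n, f #(S.informed k n)) / N
        + cm * (((Q * S.maxMapSize : ℕ) : ℝ) - ∑ n, (#(S.informed k n) : ℝ)) / (Q * N)
        + cs * (∑ q, S.len (k q) : ℕ) / (Q ! * Q * N * T)
      ≤ cm * peakLoad S + cs * commLoad S := by
  have hcomm := div_le_div_of_nonneg_right (S.averaged_chain_bound hQ hk)
    (by positivity : (0 : ℝ) ≤ Q * N * T)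
  have hfact : (0 : ℝ) < Q ! := by exact_mod_cast Q.factorial_pos
  have hQ' : (0 : ℝ) < Q := by exact_mod_cast hQ
  have hN' : (0 : ℝ) < N := by exact_mod_cast hN
  have hT' : (0 : ℝ) < T := by exact_mod_cast hT
  calc _ = cm * peakLoad S + cs * ((T * ∑ n, ((Q : ℝ) - #(S.informed k n)) / (#(S.informed k n) + 1)
          + (∑ q, S.len (k q) : ℕ) / (Q ! : ℝ)) / (Q * N * T)) := by
        have hsum_f : ∑ n, f #(S.informed k n) = cm / Q * ∑ n, (#(S.informed k n) : ℝ)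
            + cs / Q * ∑ n, ((Q : ℝ) - #(S.informed k n)) / (#(S.informed k n) + 1) := by
          simp only [hf, sum_add_distrib, mul_sum]
          congr 1 <;> refine sum_congr rfl fun n _ => ?_ <;> field_simp
        rw [hsum_f, peakLoad, maxMapSize]
        push_cast
        field_simp
        ring
    _ ≤ _ := by unfold commLoad; gcongr

lemma tight_of_load_eq (hQ : 0 < Q) (hN : 0 < N) (hT : 0 < T) {cm cs : ℝ} (hcm : 0 < cm)
    (hcs : 0 < cs) {f : ℕ → ℝ}
    (hf : ∀ r : ℕ, f r = cm * (r : ℝ) / Q + cs * ((Q : ℝ) - r) / ((Q : ℝ) * (r + 1)))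
    {rstar : ℕ} (hmin : ∀ r ∈ range (Q + 1), f rstar ≤ f r)
    (hmax : ∀ r ∈ range (Q + 1), f r = f rstar → r ≤ rstar)
    {k : Fin Q → Fin K} (hk : ∀ q, q ∈ S.W (k q))
    (hach : cm * peakLoad S + cs * commLoad S = f rstar) :
    ∑ n, #(S.informed k n) = Q * (S.maxMapSize)
      ∧ (∀ n, #(S.informed k n) ≤ rstar) ∧ ∀ q, S.len (k q) = 0 := by
  have hrange : ∀ n, #(S.informed k n) ∈ range (Q + 1) := fun n =>
    mem_range.2 (Nat.lt_succ_of_le (S.card_informed_le k n))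
  have hfge : ∀ n ∈ univ, f rstar ≤ f #(S.informed k n) := fun n _ => hmin _ (hrange n)
  have hsum_f : (N : ℝ) * f rstar ≤ ∑ n, f #(S.informed k n) := by
    simpa using sum_le_sum hfge
  have hdA : (∑ n, (#(S.informed k n) : ℝ)) ≤ ((Q * S.maxMapSize : ℕ) : ℝ) := by
    exact_mod_cast S.sum_card_informed_le k
  have hQN : (0 : ℝ) < Q * N := by positivity
  have hred : (0 : ℝ) ≤ (∑ q, S.len (k q) : ℕ) := by positivity
  have hbound := S.le_load hQ hN hT hcs hf hk
  rw [hach] at hbound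
  have hf_avg : f rstar ≤ (∑ n, f #(S.informed k n)) / N := by
    rw [le_div_iff₀ (by positivity)]; linarith
  have hpeak_slack : 0 ≤ cm * (((Q * S.maxMapSize : ℕ) : ℝ)
      - ∑ n, (#(S.informed k n) : ℝ)) / (Q * N) := by
    have := sub_nonneg.2 hdA; positivity
  have hred_slack : 0 ≤ cs * (∑ q, S.len (k q) : ℕ) / (Q ! * Q * N * T) := by positivity
  refine ⟨?_, fun n => ?_, fun q => ?_⟩
  · have h : cm * (((Q * S.maxMapSize : ℕ) : ℝ)
        - ∑ n, (#(S.informed k n) : ℝ)) / (Q * N) = 0 := by linarith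
    simp only [div_eq_zero_iff, mul_eq_zero, hcm.ne', hQN.ne', sub_eq_zero, or_false,
      false_or] at h
    exact_mod_cast h.symm
  · have hsum_eq : ∑ _n : Fin N, f rstar = ∑ n, f #(S.informed k n) := by
      refine le_antisymm (sum_le_sum hfge) ?_
      rw [sum_const, card_univ, Fintype.card_fin, nsmul_eq_mul, ← div_le_iff₀' (by positivity)]
      linarith
    exact hmax _ (hrange n) ((sum_eq_sum_iff_of_le hfge).1 hsum_eq n (mem_univ n)).symm
  · have h : cs * (∑ q, S.len (k q) : ℕ) / (Q ! * Q * N * T) = 0 := by linarith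
    have hsum : ∑ q, (S.len (k q) : ℝ) = 0 := by
      simpa [hcs.ne', Nat.factorial_ne_zero, hQ.ne', hN.ne', hT.ne'] using h
    exact sum_eq_zero_iff.1 (by exact_mod_cast hsum) q (mem_univ q)

lemma exists_helper_mem {k : Fin Q → Fin K} (hk : ∀ q, q ∈ S.W (k q))
    (hlen : ∀ q, S.len (k q) = 0) (hT : 0 < T) {n : Fin N} {q₀ : Fin Q} (hq₀ : n ∉ S.M (k q₀)) :
    ∃ j, (∀ q, k q ≠ j) ∧ n ∈ S.M j := by
  by_contra! hcon
  -- flipping the single value `v (q₀, n)` is seen neither by the reducer of `q₀` nor by any message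
  let v₀ : Fin Q × Fin N → Fin T → Bool := fun _ _ => false
  let v₁ : Fin Q × Fin N → Fin T → Bool := fun p _ => decide (p = (q₀, n))
  have hmsg : S.msg v₀ = S.msg v₁ := by
    funext j
    by_cases hj : ∃ q, k q = j
    · obtain ⟨q, rfl⟩ := hj
      funext i
      exact absurd i.isLt (by simp [hlen q])
    · simp only [not_exists] at hj
      refine msg_eq_of_local_eq fun q n' hn' => ?_
      have : n' ≠ n := by rintro rfl; exact hcon j hj hn'
      simp [v₀, v₁, this]
  have hrow := row_eq_of_msg_eq hmsg (hk q₀) (fun q n' hn' => by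
    have : n' ≠ n := by rintro rfl; exact hq₀ hn'
    simp [v₀, v₁, this]) n
  simpa [v₀, v₁] using congrFun hrow ⟨0, hT⟩

lemma card_le_mul_of_forall_exists_helper_mem {k : Fin Q → Fin K} (hk : Function.Injective k)
    (hhelp : ∀ n, ∃ j, (∀ q, k q ≠ j) ∧ n ∈ S.M j) :
    N ≤ (K - Q) * S.maxMapSize := by
  set others := univ \ univ.image k
  have hcard : #others = K - Q := by
    rw [card_sdiff_of_subset (subset_univ _), card_image_of_injective _ hk, card_univ,
      card_univ, Fintype.card_fin, Fintype.card_fin]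
  have hcover : (univ : Finset (Fin N)) ⊆ others.biUnion S.M := fun n _ => by
    obtain ⟨j, hj, hn⟩ := hhelp n
    exact mem_biUnion.2 ⟨j, by simpa [others] using hj, hn⟩
  calc N = #(univ : Finset (Fin N)) := by simp
    _ ≤ ∑ j ∈ others, #(S.M j) := (card_le_card hcover).trans card_biUnion_le
    _ ≤ ∑ _j ∈ others, S.maxMapSize := sum_le_sum fun j _ => S.le_maxMapSize j
    _ = (K - Q) * S.maxMapSize := by rw [sum_const, hcard, smul_eq_mul]

end Scheme

lemma SingletonReduce.exists_injective_reducer {K N Q T : ℕ} {S : Scheme K N Q T}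
    (hS : SingletonReduce S) : ∃ k : Fin Q → Fin K, Function.Injective k ∧ ∀ q, q ∈ S.W (k q) := by
  choose k hk using hS.2.1
  exact ⟨k, fun q q' h => card_le_one.1 (hS.2.2 (k q)) q (hk q) q' (h ▸ hk q'), hk⟩

theorem min_servers_sequential_general (Q : ℕ) (hQ : 0 < Q) (cm cs : ℝ) (hcm : 0 < cm)
    (hcs : 0 < cs) (f : ℕ → ℝ)
    (hf : ∀ r : ℕ, f r = cm * (r : ℝ) / Q + cs * ((Q : ℝ) - r) / ((Q : ℝ) * (r + 1)))
    (rstar : ℕ)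
    (hmin : ∀ r ∈ Finset.range (Q + 1), f rstar ≤ f r)
    (hmax : ∀ r ∈ Finset.range (Q + 1), f r = f rstar → r ≤ rstar)
    (h0 : 0 < rstar) (h1 : rstar < Q)
    (K N T : ℕ) (hN : 0 < N) (hT : 0 < T)
    (S : Scheme K N Q T) (hS : SingletonReduce S)
    (hach : cm * peakLoad S + cs * commLoad S = f rstar) :
    Q + ⌈(Q : ℚ) / (rstar : ℚ)⌉₊ ≤ K := by
  obtain ⟨k, hk_inj, hk⟩ := hS.exists_injective_reducer
  obtain ⟨hsum, hd_le, hlen⟩ := S.tight_of_load_eq hQ hN hT hcm hcs hf hmin hmax hk hach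
  have hhelp : ∀ n, ∃ j, (∀ q, k q ≠ j) ∧ n ∈ S.M j := fun n => by
    obtain ⟨q₀, hq₀⟩ : ∃ q₀, q₀ ∉ S.informed k n := by
      by_contra! h
      have := hd_le n
      rw [eq_univ_of_forall h, card_univ, Fintype.card_fin] at this
      omega
    exact S.exists_helper_mem hk hlen hT (by simpa using hq₀)
  have hN_le : N ≤ (K - Q) * S.maxMapSize := S.card_le_mul_of_forall_exists_helper_mem hk_inj hhelp
  have hQA : Q * S.maxMapSize ≤ N * rstar := by
    rw [← hsum]
    simpa using sum_le_sum fun n (_ : n ∈ univ) => hd_le n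
  have hA : 0 < S.maxMapSize := Nat.pos_of_ne_zero fun h => by simp [h] at hN_le; omega
  have hQ_le : Q ≤ (K - Q) * rstar :=
    Nat.le_of_mul_le_mul_right (by nlinarith [Nat.mul_le_mul_right rstar hN_le]) hA
  have hceil : ⌈(Q : ℚ) / (rstar : ℚ)⌉₊ ≤ K - Q := by
    rw [Nat.ceil_le, div_le_iff₀ (by exact_mod_cast h0)]
    exact_mod_cast hQ_le
  have hKQ : K - Q ≠ 0 := fun h => by rw [h, zero_mul] at hQ_le; omega
  omega

/-- any scheme with singleton Reduce assignment attaining the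
lower bound `min_r f(r)` with equality, where `r* = max argmin f` satisfies
`0 < r* < Q`, must use at least `Q + ⌈Q/r*⌉` servers. -/
theorem min_servers_sequential (Q : ℕ) (hQ : 0 < Q) (cm cs : ℝ) (hcm : 0 < cm)
    (hcs : 0 < cs) (f : ℕ → ℝ)
    (hf : ∀ r : ℕ, f r = cm * (r : ℝ) / Q + cs * ((Q : ℝ) - r) / ((Q : ℝ) * (r + 1)))
    (rstar : ℕ) (hmem : rstar ∈ Finset.range (Q + 1))
    (hmin : ∀ r ∈ Finset.range (Q + 1), f rstar ≤ f r)
    (hmax : ∀ r ∈ Finset.range (Q + 1), f r = f rstar → r ≤ rstar)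
    (h0 : 0 < rstar) (h1 : rstar < Q)
    (K N T : ℕ) (hK : 0 < K) (hN : 0 < N) (hT : 0 < T)
    (S : Scheme K N Q T) (hS : SingletonReduce S)
    (hach : cm * peakLoad S + cs * commLoad S = f rstar) :
    Q + ⌈(Q : ℚ) / (rstar : ℚ)⌉₊ ≤ K :=
  min_servers_sequential_general Q hQ cm cs hcm hcs f hf rstar hmin hmax h0 h1 K N T hN hT S hS hach
end

section
/- Let Q ≥ 2, let r₋ ∈ {0,…,Q−2}, r₊ = r₋ + 1, let H ≥ 1 be an integer, and let N = N₁ + N₂ with N₁, N₂ ≥ 0, N ≥ 1, H·C(Q,r₊) dividing N₁ and H·C(Q,r₋) dividing N₂ (binomial coefficients, with C(Q,0) = 1). Then for every T ≥ 1 there exists a (Q+H, N, Q, T)-scheme with singleton Reduce assignment (servers 1,…,Q are solvers, the remaining H servers are helpers reducing nothing) in which each solver maps exactly (N₁·r₊ + N₂·r₋)/Q files, each helper maps exactly N/H files, and the communication load equals (N₁·g(r₊) + N₂·g(r₋))/N, where g(x) = (Q−x)/(Q·(x+1)). -/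
/-!
Split the files into batches. A file of a batch with parameter `s` is labelled by an
`s`-subset `A` of the solvers, which are exactly the solvers mapping it, and by the helper
mapping it. For every `(s + 1)`-subset `B` of solvers, helper `h` broadcasts the XOR over
`u ∈ B` of the value of function `u` on the file labelled `(B \ {u}, h)`. Solver `q` misses
the file labelled `(A, h)` only if `q ∉ A`; in the packet for `B = A ∪ {q}` every other summand
is a value on a file containing `q`, which `q` computed itself, so it can be cancelled.
Each batch costs `H · C(Q, s + 1) · T` bits, and `C(Q, s + 1) = C(Q, s) (Q - s) / (s + 1)`
turns this into the load `g(s)` per file. Mixing `c₁` batches at `r₊` with `c₂` batches at `r₋`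
gives the theorem.
-/

noncomputable section

namespace HelperScheme

open Finset

lemma cast_choose_succ (Q n : ℕ) :
    (Q.choose (n + 1) : ℝ) = Q.choose n * ((Q : ℝ) - n) / (n + 1) := by
  rw [eq_div_iff (by positivity)]
  rcases le_or_gt n Q with hn | hn
  · have h := congrArg (Nat.cast (R := ℝ)) (Nat.choose_succ_right_eq Q n)
    push_cast [hn] at h
    exact h
  · simp [Nat.choose_eq_zero_of_lt hn, Nat.choose_eq_zero_of_lt (hn.trans (Nat.lt_succ_self n))]

lemma card_filter_mem_powersetCard_mul {Q : ℕ} (q : Fin Q) (n : ℕ) :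
    #{A ∈ powersetCard n (univ : Finset (Fin Q)) | q ∈ A} * Q = Q.choose n * n := by
  cases n with
  | zero => simp
  | succ m =>
    obtain ⟨P, rfl⟩ : ∃ P, Q = P + 1 := ⟨Q - 1, by have := q.pos; omega⟩
    simp_rw [← singleton_subset_iff]
    rw [card_filter_powersetCard_subset _ _ _ (subset_univ _) (by simp)]
    simp only [card_singleton, card_univ, Fintype.card_fin, Nat.add_sub_cancel]
    rw [mul_comm, Nat.add_one_mul_choose_eq]

lemma finSumFinEquiv_symm_of_lt {m n : ℕ} {k : Fin (m + n)} (hk : (k : ℕ) < m) :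
    finSumFinEquiv.symm k = .inl ⟨k, hk⟩ :=
  finSumFinEquiv_symm_apply_castAdd ⟨k, hk⟩

lemma finSumFinEquiv_symm_of_le {m n : ℕ} {k : Fin (m + n)} (hk : m ≤ (k : ℕ)) :
    finSumFinEquiv.symm k = .inr ⟨k - m, by omega⟩ := by
  rw [← finSumFinEquiv_symm_apply_natAdd]
  congr
  ext
  simp only [Fin.natAdd_mk]
  omega

lemma singletonReduce_of_solvers {Q H N T : ℕ} {S : Scheme (Q + H) N Q T}
    (hsolver : ∀ (k : Fin (Q + H)) (h : (k : ℕ) < Q), S.W k = {⟨k, h⟩})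
    (hhelper : ∀ k : Fin (Q + H), Q ≤ (k : ℕ) → S.W k = ∅) : SingletonReduce S := by
  have hW (k : Fin (Q + H)) : S.W k = if h : (k : ℕ) < Q then {⟨k, h⟩} else ∅ := by
    split_ifs with h
    exacts [hsolver k h, hhelper k (not_lt.1 h)]
  refine ⟨fun j k hjk => ?_, fun q => ⟨Fin.castAdd H q, by simp [hsolver]⟩, fun k => ?_⟩
  · rw [hW, hW]
    split_ifs <;> simp [Fin.ext_iff, Fin.val_ne_of_ne hjk]
  · rw [hW]
    split_ifs <;> simp

/-- The junk value `0` off `S` is never read by the encoders and decoders below. -/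
def extendLocal {α γ β : Type*} [DecidableEq α] [Zero β] (S : Finset α) (lv : γ → S → β) :
    γ → α → β :=
  fun u a => if h : a ∈ S then lv u ⟨a, h⟩ else 0

lemma extendLocal_of_mem {α γ β : Type*} [DecidableEq α] [Zero β] {S : Finset α}
    (w : γ → α → β) (u : γ) {a : α} (ha : a ∈ S) :
    extendLocal S (fun u a => w u a) u a = w u a := by
  simp [extendLocal, ha]

def serialize {P : Type*} [Fintype P] (g : P → Bool) (m : ℕ) : Bool :=
  if hm : m < Fintype.card P then g ((Fintype.equivFin P).symm ⟨m, hm⟩) else false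

def bitAt {L : ℕ} (y : Fin L → Bool) (m : ℕ) : Bool :=
  if hm : m < L then y ⟨m, hm⟩ else false

lemma bitAt_serialize {P : Type*} [Fintype P] (g : P → Bool) (p : P) :
    bitAt (fun m : Fin (Fintype.card P) => serialize g m) (Fintype.equivFin P p) = g p := by
  simp [bitAt, serialize]

variable {ι : Type*}

abbrev Block (Q : ℕ) (s : ι → ℕ) : Type _ := Σ i : ι, powersetCard (s i) (univ : Finset (Fin Q))

abbrev File (Q H : ℕ) (s : ι → ℕ) : Type _ := Block Q s × Fin H

abbrev Packet (Q T : ℕ) (s : ι → ℕ) : Type _ := Block Q (fun i => s i + 1) × Fin T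

variable {Q H N T : ℕ} {s : ι → ℕ} (e : File Q H s ≃ Fin N)

def valueAt (x : Fin Q → Fin N → Fin T → Bool) (u : Fin Q) (i : ι) (A : Finset (Fin Q))
    (h : Fin H) : Fin T → Bool :=
  if hA : A ∈ powersetCard (s i) univ then x u (e (⟨i, A, hA⟩, h)) else 0

def codedBit (x : Fin Q → Fin N → Fin T → Bool) (h : Fin H) : Packet Q T s → Bool
  | (⟨i, B, _⟩, t) => ∑ u ∈ B, valueAt e x u i (B.erase u) h t

lemma codedBit_insert (v : Fin Q → Fin N → Fin T → Bool) {q : Fin Q} {A : Finset (Fin Q)}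
    (hq : q ∉ A) {i : ι} (hB : insert q A ∈ powersetCard (s i + 1) univ) (h : Fin H)
    (t : Fin T) :
    codedBit e v h (⟨i, insert q A, hB⟩, t) =
      valueAt e v q i A h t + ∑ u ∈ A, valueAt e v u i ((insert q A).erase u) h t := by
  rw [codedBit, sum_insert hq, erase_insert hq]

variable [Fintype ι]

def storedBy : Fin Q ⊕ Fin H → Finset (Fin N)
  | .inl q => (univ.filter fun f : File Q H s => q ∈ f.1.2.1).map e.toEmbedding
  | .inr h => (univ.filter fun f : File Q H s => f.2 = h).map e.toEmbedding

def reducedBy : Fin Q ⊕ Fin H → Finset (Fin Q)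
  | .inl q => {q}
  | .inr _ => ∅

variable (Q T s) in
def msgLength : Fin Q ⊕ Fin H → ℕ
  | .inl _ => 0
  | .inr _ => Fintype.card (Packet Q T s)

def encodeRole : Fin Q ⊕ Fin H → (Fin Q → Fin N → Fin T → Bool) → ℕ → Bool
  | .inl _, _ => fun _ => false
  | .inr h, x => serialize (codedBit e x h)

def decodeFile (q : Fin Q) (y : Fin H → ℕ → Bool) (x : Fin Q → Fin N → Fin T → Bool) :
    File Q H s → Fin T → Bool
  | (⟨i, A, hA⟩, h) =>
    if hq : q ∈ A then x q (e (⟨i, A, hA⟩, h))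
    else
      have hB : insert q A ∈ powersetCard (s i + 1) univ := by
        rw [mem_powersetCard_univ] at hA ⊢
        rw [card_insert_of_notMem hq, hA]
      fun t => y h (Fintype.equivFin (Packet Q T s) (⟨i, insert q A, hB⟩, t)) +
        ∑ u ∈ A, valueAt e x u i ((insert q A).erase u) h t

lemma mem_storedBy_inl {q : Fin Q} {f : File Q H s} :
    e f ∈ storedBy e (.inl q) ↔ q ∈ f.1.2.1 := by
  simp [storedBy]

lemma mem_storedBy_inr (b : Block Q s) (h : Fin H) : e (b, h) ∈ storedBy e (.inr h) := by
  simp [storedBy]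

lemma codedBit_extendLocal (v : Fin Q → Fin N → Fin T → Bool) (h : Fin H) :
    codedBit e (extendLocal (storedBy e (.inr h)) fun u n => v u n) h = codedBit e v h := by
  funext ⟨⟨i, B, _⟩, t⟩
  refine sum_congr rfl fun u _ => ?_
  unfold valueAt
  split_ifs
  · rw [extendLocal_of_mem v u (mem_storedBy_inr e _ h)]
  · rfl

lemma valueAt_extendLocal_inl (v : Fin Q → Fin N → Fin T → Bool) {q : Fin Q}
    {A : Finset (Fin Q)} (hq : q ∈ A) (u : Fin Q) (i : ι) (h : Fin H) :
    valueAt e (extendLocal (storedBy e (.inl q)) fun u n => v u n) u i A h =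
      valueAt e v u i A h := by
  unfold valueAt
  split_ifs
  · rw [extendLocal_of_mem v u ((mem_storedBy_inl e).2 hq)]
  · rfl

lemma bitAt_encodeRole (v : Fin Q → Fin N → Fin T → Bool) {h : Fin H} {r : Fin Q ⊕ Fin H}
    (hr : r = .inr h) (p : Packet Q T s) :
    bitAt (fun m : Fin (msgLength Q T s r) =>
        encodeRole e r (extendLocal (storedBy e r) fun u n => v u n) m)
      (Fintype.equivFin _ p) = codedBit e v h p := by
  subst hr
  rw [← codedBit_extendLocal]
  exact bitAt_serialize _ _

lemma decodeFile_extendLocal {v : Fin Q → Fin N → Fin T → Bool} {q : Fin Q}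
    {y : Fin H → ℕ → Bool} (hy : ∀ h p, y h (Fintype.equivFin _ p) = codedBit e v h p)
    (f : File Q H s) :
    decodeFile e q y (extendLocal (storedBy e (.inl q)) fun u n => v u n) f = v q (e f) := by
  obtain ⟨⟨i, A, hA⟩, h⟩ := f
  dsimp only [decodeFile]
  split_ifs with hq
  · exact extendLocal_of_mem _ _ ((mem_storedBy_inl e).2 hq)
  funext t
  have hside : ∑ u ∈ A, valueAt e (extendLocal (storedBy e (.inl q)) fun u n => v u n) u i
      ((insert q A).erase u) h t = ∑ u ∈ A, valueAt e v u i ((insert q A).erase u) h t := by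
    refine sum_congr rfl fun u hu => ?_
    rw [valueAt_extendLocal_inl e v
      (mem_erase.2 ⟨by rintro rfl; exact hq hu, mem_insert_self q A⟩)]
  rw [hy, codedBit_insert e v hq, hside, add_assoc, BooleanRing.add_self, add_zero, valueAt,
    dif_pos hA]

variable (T) in
def scheme : Scheme (Q + H) N Q T where
  M k := storedBy e (finSumFinEquiv.symm k)
  W k := reducedBy (finSumFinEquiv.symm k)
  cover n := ⟨finSumFinEquiv (.inr (e.symm n).2), by
    simpa using mem_storedBy_inr e (e.symm n).1 (e.symm n).2⟩
  len k := msgLength Q T s (finSumFinEquiv.symm k)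
  enc k lv m := encodeRole e (finSumFinEquiv.symm k) (extendLocal _ lv) m
  dec _ q _ msgs lv n :=
    decodeFile e q (fun h => bitAt (msgs (finSumFinEquiv (.inr h)))) (extendLocal _ lv) (e.symm n)
  correct v k q hq := by
    obtain hk : finSumFinEquiv.symm k = .inl q := by
      revert hq
      rcases finSumFinEquiv.symm k with q' | _ <;> simp [reducedBy, eq_comm]
    funext n
    dsimp only
    rw [hk]
    conv_rhs => rw [← e.apply_symm_apply n]
    exact decodeFile_extendLocal e (v := fun u n => v (u, n))
      (fun _ p => bitAt_encodeRole e _ (finSumFinEquiv.symm_apply_apply _) p) _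

lemma scheme_M (k : Fin (Q + H)) : (scheme T e).M k = storedBy e (finSumFinEquiv.symm k) := rfl

lemma scheme_W_of_lt {k : Fin (Q + H)} (hk : (k : ℕ) < Q) : (scheme T e).W k = {⟨k, hk⟩} := by
  simp [scheme, finSumFinEquiv_symm_of_lt hk, reducedBy]

lemma scheme_W_of_le {k : Fin (Q + H)} (hk : Q ≤ (k : ℕ)) : (scheme T e).W k = ∅ := by
  simp [scheme, finSumFinEquiv_symm_of_le hk, reducedBy]

lemma card_storedBy_inl_mul (q : Fin Q) :
    #(storedBy e (.inl q)) * Q = (∑ i, Q.choose (s i) * s i) * H := by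
  have hblocks : #{b : Block Q s | q ∈ b.2.1} = ∑ i, #{A ∈ powersetCard (s i) univ | q ∈ A} := by
    simp only [card_filter, Fintype.sum_sigma]
    exact sum_congr rfl fun i _ => sum_coe_sort _ fun A => if q ∈ A then 1 else 0
  rw [storedBy, card_map, ← univ_product_univ, filter_product_left (fun b : Block Q s => q ∈ b.2.1),
    card_product, card_univ, Fintype.card_fin, hblocks, mul_right_comm, sum_mul]
  simp_rw [card_filter_mem_powersetCard_mul]

lemma card_storedBy_inr (h : Fin H) : #(storedBy e (.inr h)) = ∑ i, Q.choose (s i) := by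
  rw [storedBy, card_map, ← univ_product_univ, filter_product_right (· = h), card_product,
    filter_eq' univ h]
  simp

lemma sum_len_scheme : ∑ k, (scheme T e).len k = H * ((∑ i, Q.choose (s i + 1)) * T) := by
  rw [← finSumFinEquiv.sum_comp]
  simp [scheme, msgLength]

lemma commLoad_scheme (hT : T ≠ 0) :
    commLoad (scheme T e) =
      (∑ i, (H : ℝ) * Q.choose (s i) * (((Q : ℝ) - s i) / (Q * (s i + 1)))) / N := by
  have hlen : ∑ k, ((scheme T e).len k : ℝ) = H * (∑ i, (Q.choose (s i + 1) : ℝ)) * T := by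
    exact_mod_cast (sum_len_scheme e).trans (by ring)
  rw [commLoad, hlen, mul_div_mul_right _ _ (by exact_mod_cast hT), mul_sum, sum_div, sum_div]
  refine sum_congr rfl fun i _ => ?_
  simp only [cast_choose_succ, div_eq_mul_inv, mul_inv]
  ring

end HelperScheme

end

open Finset HelperScheme

theorem coded_scheme_exists_mixed_general (Q rm rp H N N1 N2 : ℕ)
    (hrp : rp = rm + 1)
    (hN : N = N1 + N2)
    (hd1 : H * Nat.choose Q rp ∣ N1) (hd2 : H * Nat.choose Q rm ∣ N2) :
    ∀ T : ℕ, 1 ≤ T → ∃ S : Scheme (Q + H) N Q T,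
      SingletonReduce S ∧
      (∀ (k : Fin (Q + H)) (h : (k : ℕ) < Q), S.W k = {⟨(k : ℕ), h⟩}) ∧
      (∀ k : Fin (Q + H), Q ≤ (k : ℕ) → S.W k = ∅) ∧
      (∀ k : Fin (Q + H), (k : ℕ) < Q → (S.M k).card * Q = N1 * rp + N2 * rm) ∧
      (∀ k : Fin (Q + H), Q ≤ (k : ℕ) → (S.M k).card * H = N) ∧
      commLoad S = ((N1 : ℝ) * (((Q : ℝ) - rp) / ((Q : ℝ) * (rp + 1)))
        + (N2 : ℝ) * (((Q : ℝ) - rm) / ((Q : ℝ) * (rm + 1)))) / N := by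
  intro T hT
  subst hrp hN
  obtain ⟨c₁, rfl⟩ := hd1
  obtain ⟨c₂, rfl⟩ := hd2
  let s : Fin c₁ ⊕ Fin c₂ → ℕ := Sum.elim (fun _ => rm + 1) (fun _ => rm)
  have hcard : Fintype.card (File Q H s) = H * Q.choose (rm + 1) * c₁ + H * Q.choose rm * c₂ := by
    simp only [Fintype.card_prod, Fintype.card_sigma, Fintype.card_coe, card_powersetCard,
      card_univ, Fintype.card_fin, Fintype.sum_sum_type, Sum.elim_inl, Sum.elim_inr, sum_const,
      smul_eq_mul, s]
    ring
  let e := Fintype.equivFinOfCardEq hcard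
  refine ⟨scheme T e, singletonReduce_of_solvers (fun _ => scheme_W_of_lt e)
    (fun _ => scheme_W_of_le e), fun _ => scheme_W_of_lt e, fun _ => scheme_W_of_le e,
    fun k hk => ?_, fun k hk => ?_, ?_⟩
  · rw [scheme_M, finSumFinEquiv_symm_of_lt hk, card_storedBy_inl_mul]
    simp only [Fintype.sum_sum_type, Sum.elim_inl, Sum.elim_inr, sum_const, card_univ,
      Fintype.card_fin, smul_eq_mul, s]
    ring
  · rw [scheme_M, finSumFinEquiv_symm_of_le hk, card_storedBy_inr]
    simp only [Fintype.sum_sum_type, Sum.elim_inl, Sum.elim_inr, sum_const, card_univ,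
      Fintype.card_fin, smul_eq_mul, s]
    ring
  · rw [commLoad_scheme e (by omega)]
    simp only [Fintype.sum_sum_type, Sum.elim_inl, Sum.elim_inr, sum_const, card_univ,
      Fintype.card_fin, nsmul_eq_mul, s]
    push_cast
    ring

/-- achievability by memory sharing between two integer points
`r₋` and `r₊ = r₋ + 1` (used for the parallel implementation). -/
theorem coded_scheme_exists_mixed (Q rm rp H N N1 N2 : ℕ) (hQ : 2 ≤ Q)
    (hrm : rm ≤ Q - 2) (hrp : rp = rm + 1) (hH : 1 ≤ H)
    (hN : N = N1 + N2) (hNpos : 1 ≤ N)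
    (hd1 : H * Nat.choose Q rp ∣ N1) (hd2 : H * Nat.choose Q rm ∣ N2) :
    ∀ T : ℕ, 1 ≤ T → ∃ S : Scheme (Q + H) N Q T,
      SingletonReduce S ∧
      (∀ (k : Fin (Q + H)) (h : (k : ℕ) < Q), S.W k = {⟨(k : ℕ), h⟩}) ∧
      (∀ k : Fin (Q + H), Q ≤ (k : ℕ) → S.W k = ∅) ∧
      (∀ k : Fin (Q + H), (k : ℕ) < Q → (S.M k).card * Q = N1 * rp + N2 * rm) ∧
      (∀ k : Fin (Q + H), Q ≤ (k : ℕ) → (S.M k).card * H = N) ∧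
      commLoad S = ((N1 : ℝ) * (((Q : ℝ) - rp) / ((Q : ℝ) * (rp + 1)))
        + (N2 : ℝ) * (((Q : ℝ) - rm) / ((Q : ℝ) * (rm + 1)))) / N :=
  coded_scheme_exists_mixed_general Q rm rp H N N1 N2 hrp hN hd1 hd2
end

section
/- Let Q ≥ 1 be an integer, c_m, c_s > 0 reals, and set λ = c_s/c_m and ρ = √(Q·λ + ((λ+1)/2)²) − (λ+1)/2. Then 0 < ρ < Q, ρ is the unique nonnegative real solution of c_m·ρ·(ρ+1) = c_s·(Q−ρ) (equivalently c_m·ρ/Q = c_s·(Q−ρ)/(Q·(ρ+1))), and the minimum over real x ∈ [0,Q] of max{c_m·x/Q, c_s·(Q−x)/(Q·(x+1))} equals c_m·ρ/Q and is attained uniquely at x = ρ. -/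
/-- with `λ = c_s/c_m` and
`ρ = √(Q·λ + ((λ+1)/2)²) − (λ+1)/2`, we have `0 < ρ < Q`, `ρ` is the unique
nonnegative solution of `c_m·ρ·(ρ+1) = c_s·(Q−ρ)` (equivalently
`c_m·ρ/Q = c_s·(Q−ρ)/(Q·(ρ+1))`), and the minimum over `x ∈ [0,Q]` of
`max{c_m·x/Q, c_s·(Q−x)/(Q·(x+1))}` equals `c_m·ρ/Q`, attained uniquely at
`x = ρ`. -/
theorem real_min_parallel (Q : ℕ) (hQ : 1 ≤ Q) (cm cs : ℝ) (hcm : 0 < cm)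
    (hcs : 0 < cs) (lam ρ : ℝ) (hlam : lam = cs / cm)
    (hρ : ρ = Real.sqrt ((Q : ℝ) * lam + ((lam + 1) / 2) ^ 2) - (lam + 1) / 2) :
    0 < ρ ∧ ρ < (Q : ℝ) ∧
    cm * ρ * (ρ + 1) = cs * ((Q : ℝ) - ρ) ∧
    cm * ρ / Q = cs * ((Q : ℝ) - ρ) / ((Q : ℝ) * (ρ + 1)) ∧
    (∀ x : ℝ, 0 ≤ x → cm * x * (x + 1) = cs * ((Q : ℝ) - x) → x = ρ) ∧
    IsLeast ((fun x : ℝ => max (cm * x / Q) (cs * ((Q : ℝ) - x) / ((Q : ℝ) * (x + 1)))) ''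
      Set.Icc (0 : ℝ) (Q : ℝ)) (cm * ρ / Q) ∧
    ∀ x ∈ Set.Icc (0 : ℝ) (Q : ℝ),
      max (cm * x / Q) (cs * ((Q : ℝ) - x) / ((Q : ℝ) * (x + 1))) = cm * ρ / Q → x = ρ := by
  have hQ0 : (0 : ℝ) < (Q : ℝ) := by exact_mod_cast hQ
  have hlam0 : 0 < lam := by rw [hlam]; positivity
  have hcl : cm * lam = cs := by rw [hlam]; field_simp
  have hnn : (0 : ℝ) ≤ (Q : ℝ) * lam + ((lam + 1) / 2) ^ 2 := by positivity
  have h1 : ρ + (lam + 1) / 2 = Real.sqrt ((Q : ℝ) * lam + ((lam + 1) / 2) ^ 2) := by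
    rw [hρ]; ring
  have h2 : (ρ + (lam + 1) / 2) ^ 2 = (Q : ℝ) * lam + ((lam + 1) / 2) ^ 2 := by
    rw [h1]; exact Real.sq_sqrt hnn
  have hρpos : 0 < ρ := by
    have hlt : (lam + 1) / 2 < Real.sqrt ((Q : ℝ) * lam + ((lam + 1) / 2) ^ 2) := by
      rw [Real.lt_sqrt (by positivity)]
      nlinarith [mul_pos hQ0 hlam0]
    rw [hρ]; linarith
  have hkey : cm * ρ * (ρ + 1) = cs * ((Q : ℝ) - ρ) := by
    linear_combination cm * h2 + ((Q : ℝ) - ρ) * hcl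
  have hρQ : ρ < (Q : ℝ) := by nlinarith
  have heq : cm * ρ / Q = cs * ((Q : ℝ) - ρ) / ((Q : ℝ) * (ρ + 1)) := by
    rw [div_eq_div_iff (ne_of_gt hQ0) (by positivity)]
    linear_combination (Q : ℝ) * hkey
  have huniq : ∀ x : ℝ, 0 ≤ x → cm * x * (x + 1) = cs * ((Q : ℝ) - x) → x = ρ := by
    intro x hx hxeq
    have hfac : (x - ρ) * (cm * (x + ρ) + cm + cs) = 0 := by
      linear_combination hxeq - hkey
    have hpos : 0 < cm * (x + ρ) + cm + cs := by positivity
    rcases mul_eq_zero.mp hfac with h | h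
    · linarith
    · linarith
  have hlb : ∀ x ∈ Set.Icc (0 : ℝ) (Q : ℝ),
      cm * ρ / Q ≤ max (cm * x / Q) (cs * ((Q : ℝ) - x) / ((Q : ℝ) * (x + 1))) := by
    rintro x ⟨hx0, hxQ⟩
    rcases le_total ρ x with h | h
    · refine le_trans ?_ (le_max_left _ _)
      gcongr
    · refine le_trans ?_ (le_max_right _ _)
      rw [heq, div_le_div_iff₀ (by positivity) (by positivity)]
      nlinarith [mul_nonneg (mul_nonneg (mul_nonneg hcs.le hQ0.le) (sub_nonneg.mpr h))
        (by linarith : (0:ℝ) ≤ (Q:ℝ) + 1)]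
  refine ⟨hρpos, hρQ, hkey, heq, huniq, ⟨⟨ρ, ⟨le_of_lt hρpos, le_of_lt hρQ⟩, ?_⟩, ?_⟩, ?_⟩
  · simp only
    rw [← heq, max_self]
  · rintro y ⟨x, hx, rfl⟩
    exact hlb x hx
  · rintro x ⟨hx0, hxQ⟩ hmax
    rcases lt_trichotomy x ρ with h | h | h
    · exfalso
      have h2' : cm * ρ / Q < cs * ((Q : ℝ) - x) / ((Q : ℝ) * (x + 1)) := by
        rw [heq, div_lt_div_iff₀ (by positivity) (by positivity)]
        nlinarith [mul_pos (mul_pos (mul_pos hcs hQ0) (sub_pos.mpr h))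
          (by linarith : (0:ℝ) < (Q:ℝ) + 1)]
      have := le_max_right (cm * x / Q) (cs * ((Q : ℝ) - x) / ((Q : ℝ) * (x + 1)))
      rw [hmax] at this
      linarith
    · exact h
    · exfalso
      have h1' : cm * ρ / Q < cm * x / Q := by gcongr
      have := le_max_left (cm * x / Q) (cs * ((Q : ℝ) - x) / ((Q : ℝ) * (x + 1)))
      rw [hmax] at this
      linarith
end
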